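/- arXiv:1907.05087 — 6 statements merged into one kernel-verified Lean document; each statement's English description precedes it below -/
import Mathlib

section
/- For every integer k ≥ 1 there exist a natural number T with 1 ≤ T ≤ 3·2^{k−1} − k + 1 and a sequence X₁, …, X_T of invertible matrices in GL(k, F₂) such that X_T = I and, for every row index p ∈ {1, …, k} and every nonzero vector v ∈ F₂^k, there exists t ∈ {1, …, T} with row p of X_t equal to v. (Such a sequence is called a row-traversal sequence.) -/
/-!
Identify `F₂^k` with the field `𝔽_{2^k}` through a basis `b`, and let `g` generate the cyclic
group `𝔽_{2^k}ˣ`. Take `X_t` to be the matrix of multiplication by `g^t`, transposed so that its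
row `p` holds the coordinates of `g^t * b p`. As `t` runs through `1, …, 2^k - 1`, the element
`g^t * b p` runs through all nonzero elements of the field, so every row meets every nonzero
vector, and `X_{2^k-1} = I`. This Singer cycle has length `2^k - 1 ≤ 3·2^(k-1) - k + 1`.
-/

open Matrix Algebra

def IsRowTraversal {ι K : Type*} [Fintype ι] [DecidableEq ι] [Semiring K]
    (T : ℕ) (X : ℕ → Matrix ι ι K) : Prop :=
  (∀ t : ℕ, 1 ≤ t → t ≤ T → IsUnit (X t)) ∧
    X T = 1 ∧
    ∀ (p : ι) (v : ι → K), v ≠ 0 → ∃ t : ℕ, 1 ≤ t ∧ t ≤ T ∧ X t p = v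

theorem exists_pow_eq_of_mem_zpowers {G : Type*} [Group G] [Finite G] {g x : G}
    (hx : x ∈ Subgroup.zpowers g) : ∃ t : ℕ, 1 ≤ t ∧ t ≤ orderOf g ∧ g ^ t = x := by
  classical
  obtain ⟨m, hm, rfl⟩ := Finset.mem_image.1 (mem_zpowers_iff_mem_range_orderOf.1 hx)
  rcases Nat.eq_zero_or_pos m with rfl | hm0
  · exact ⟨orderOf g, orderOf_pos g, le_rfl, by rw [pow_orderOf_eq_one, pow_zero]⟩
  · exact ⟨m, hm0, (Finset.mem_range.1 hm).le, rfl⟩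

section SingerCycle

variable {ι K F : Type*} [Fintype ι] [DecidableEq ι] [Field K] [Field F] [Algebra K F]
  (b : Module.Basis ι K F)

theorem leftMulMatrix_transpose_row (x : F) (p : ι) :
    (leftMulMatrix b x)ᵀ p = b.repr (x * b p) := by
  ext i
  rw [transpose_apply, leftMulMatrix_eq_repr_mul]

theorem leftMulMatrix_transpose_row_div (v : ι → K) (p : ι) :
    (leftMulMatrix b (b.equivFun.symm v / b p))ᵀ p = v := by
  rw [leftMulMatrix_transpose_row, div_mul_cancel₀ _ (b.ne_zero p)]
  exact b.equivFun.apply_symm_apply v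

theorem isRowTraversal_leftMulMatrix_transpose_pow [Finite F] {g : Fˣ}
    (hg : ∀ x, x ∈ Subgroup.zpowers g) :
    IsRowTraversal (orderOf g) (fun t => (leftMulMatrix b ((g ^ t : Fˣ) : F))ᵀ) := by
  refine ⟨fun t _ _ => ?_, ?_, fun p v hv => ?_⟩
  · exact (isUnit_transpose _).2 ((g ^ t).isUnit.map (leftMulMatrix b))
  · simp only [pow_orderOf_eq_one, Units.val_one, map_one, transpose_one]
  · have hx : b.equivFun.symm v / b p ≠ 0 :=
      div_ne_zero (b.equivFun.symm.map_ne_zero_iff.2 hv) (b.ne_zero p)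
    obtain ⟨t, ht1, htT, hgt⟩ := exists_pow_eq_of_mem_zpowers (hg (Units.mk0 _ hx))
    refine ⟨t, ht1, htT, ?_⟩
    simp only [hgt, Units.val_mk0, leftMulMatrix_transpose_row_div]

end SingerCycle

theorem row_traversal_sequence_exists (k : ℕ) (hk : 1 ≤ k) :
    ∃ T : ℕ, 1 ≤ T ∧ T ≤ 3 * 2 ^ (k - 1) - k + 1 ∧
    ∃ X : ℕ → Matrix (Fin k) (Fin k) (ZMod 2),
      (∀ t : ℕ, 1 ≤ t → t ≤ T → IsUnit (X t)) ∧
      X T = 1 ∧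
      ∀ (p : Fin k) (v : Fin k → ZMod 2), v ≠ 0 →
        ∃ t : ℕ, 1 ≤ t ∧ t ≤ T ∧ X t p = v := by
  have hk0 : k ≠ 0 := by omega
  let F := GaloisField 2 k
  let b : Module.Basis (Fin k) (ZMod 2) F :=
    (Module.finBasis (ZMod 2) F).reindex (finCongr (GaloisField.finrank 2 hk0))
  obtain ⟨g, hg⟩ := IsCyclic.exists_generator (α := Fˣ)
  have hT : orderOf g = 2 ^ k - 1 := by
    rw [orderOf_eq_card_of_forall_mem_zpowers hg, Nat.card_units, GaloisField.card 2 k hk0]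
  have hsplit : 2 ^ k = 2 * 2 ^ (k - 1) := by rw [← pow_succ', Nat.sub_add_cancel hk]
  have hlt : k - 1 < 2 ^ (k - 1) := Nat.lt_two_pow_self
  exact ⟨orderOf g, by omega, by omega, _, isRowTraversal_leftMulMatrix_transpose_pow b hg⟩
end

section
/- There exists a constant C > 0 such that for every integer m ≥ 1 the following holds with n = 4^m (so that √n = 2^m and (1/2)·log₂ n = m). For every natural number t with 1 ≤ t ≤ m·2^m and every matrix Y ∈ F₂^{2^m × m} having at most t nonzero entries, there exist a matrix E ∈ F₂^{2^m × t}, a natural number d ≤ C · m, and parallel row-elimination matrices R₁, …, R_d of size (m + 2^m + t) × (m + 2^m + t) such that R_d ⋯ R₂R₁ equals the block matrix with block rows [I_m, 0, 0], [Y, I_{2^m}, E], [0, 0, I_t] (blocks of sizes m, 2^m, t). -/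
open Matrix

/-- A parallel row-elimination matrix over `F₂`: either the identity, or
`I + Σ_k E_{j_k, i_k}` where the `2t` indices `i_1, j_1, …, i_t, j_t` are pairwise distinct. -/
def IsParallelRowElim {ι : Type} [DecidableEq ι] (R : Matrix ι ι (ZMod 2)) : Prop :=
  R = 1 ∨ ∃ (t : ℕ) (i j : Fin t → ι),
    Function.Injective (Sum.elim i j) ∧
    R = 1 + ∑ k : Fin t, Matrix.single (j k) (i k) 1


/-! Give every nonzero entry of `Y` its own ancilla and number the entries of each column by rank.
In `L` doubling rounds the ancilla of rank `q ≥ 1` adds the source row of rank `q - 2^⌊log₂ q⌋`,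
the source of rank `0` being the control row `c` itself; afterwards every ancilla of column `c`
holds `e_c` plus ancilla unit vectors. One layer per column adds these copies into the target rows,
which are distinct within a column. Repeating the doubling rounds in reverse order clears the
ancillas again: each round reads only rows it does not write, so over `F₂` its second application
cancels the first. Besides `Y`, the target rows are left with an ancilla part `E`. This takes
`2L + m` layers, and `L = m` suffices when there are `2^m` rows. -/

open Finset

namespace CnotSynthesis

section Layer

variable {ι A : Type} [DecidableEq ι]

def layer (s : Finset A) (tgt src : A → ι) : Matrix ι ι (ZMod 2) :=
  1 + ∑ a ∈ s, single (tgt a) (src a) 1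

theorem layer_mul [Fintype ι] (s : Finset A) (tgt src : A → ι) (M : Matrix ι ι (ZMod 2)) :
    layer s tgt src * M = M + ∑ a ∈ s, updateRow 0 (tgt a) (M (src a)) := by
  simp only [layer, add_mul, one_mul, sum_mul, single_mul_eq_updateRow_zero, one_smul]
  rfl

theorem isParallelRowElim_layer (s : Finset A) {tgt src : A → ι} (hsrc : Set.InjOn src s)
    (htgt : Set.InjOn tgt s) (hdisj : ∀ a ∈ s, ∀ b ∈ s, src a ≠ tgt b) :
    IsParallelRowElim (layer s tgt src) := by
  right
  let e := s.equivFin.symm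
  have hinj {f : A → ι} (hf : Set.InjOn f s) : Function.Injective fun k => f (e k) :=
    fun k l h => e.injective (Subtype.ext (hf (e k).2 (e l).2 h))
  refine ⟨#s, fun k => src (e k), fun k => tgt (e k),
    (hinj hsrc).sumElim (hinj htgt) fun k l => hdisj _ (e k).2 _ (e l).2, ?_⟩
  rw [layer, ← sum_coe_sort s]
  exact congrArg _ (e.sum_comp fun a => single (tgt a) (src a) 1).symm

end Layer

theorem reverse_ofFn_prod_mul_eq {G : Type*} [Monoid G] {d : ℕ} (R : Fin d → G) (P : ℕ → G)
    (hstep : ∀ l : Fin d, R l * P l = P (l + 1)) : (List.ofFn R).reverse.prod * P 0 = P d := by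
  induction d with
  | zero => simp
  | succ d ih =>
    rw [List.ofFn_succ', List.concat_eq_append, List.reverse_append, List.reverse_singleton,
      List.singleton_append, List.prod_cons, mul_assoc, ih _ fun l => hstep l.castSucc]
    exact hstep (Fin.last d)

def treeParent (q : ℕ) : ℕ := q - 2 ^ Nat.log 2 q

theorem treeParent_le (q : ℕ) : treeParent q ≤ q := Nat.sub_le _ _

theorem treeParent_lt {q : ℕ} (hq : q ≠ 0) : treeParent q < q :=
  Nat.sub_lt (Nat.pos_of_ne_zero hq) (Nat.two_pow_pos _)

theorem treeParent_eq_sub {e q : ℕ} (h₁ : 2 ^ e ≤ q) (h₂ : q < 2 ^ (e + 1)) :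
    treeParent q = q - 2 ^ e := by
  rw [treeParent, Nat.log_eq_of_pow_le_of_lt_pow h₁ h₂]

section Entries

variable {m : ℕ} {β : Type} [Fintype β]

def colSupport (Y : Matrix β (Fin m) (ZMod 2)) (c : Fin m) : Finset β :=
  univ.filter (Y · c ≠ 0)

/-- The nonzero entries of `Y`, each given by its column and its rank within the column. -/
abbrev Entry (Y : Matrix β (Fin m) (ZMod 2)) : Type := Σ c : Fin m, Fin #(colSupport Y c)

variable {Y : Matrix β (Fin m) (ZMod 2)}

noncomputable def entryRow (n : Entry Y) : β := (colSupport Y n.1).equivFin.symm n.2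

theorem entry_ext {n n' : Entry Y} (hcol : n.1 = n'.1) (hrank : n.2.val = n'.2.val) : n = n' := by
  obtain ⟨c, r⟩ := n
  obtain ⟨c', r'⟩ := n'
  cases hcol
  exact congrArg _ (Fin.ext hrank)

theorem entryRow_injective_of_col_eq {n n' : Entry Y} (hcol : n.1 = n'.1)
    (h : entryRow n = entryRow n') : n = n' := by
  obtain ⟨c, r⟩ := n
  obtain ⟨c', r'⟩ := n'
  cases hcol
  exact congrArg _ ((colSupport Y c).equivFin.symm.injective (Subtype.ext h))

theorem sum_entryRow_col {R : Type*} [AddCommMonoid R] (c : Fin m) (f : β → R) :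
    ∑ r, f (entryRow (⟨c, r⟩ : Entry Y)) = ∑ j ∈ colSupport Y c, f j := by
  rw [← sum_coe_sort (colSupport Y c)]
  exact (colSupport Y c).equivFin.symm.sum_comp fun j => f j

theorem card_entry :
    Fintype.card (Entry Y) = #(univ.filter fun p : β × Fin m => Y p.1 p.2 ≠ 0) := by
  simp only [Fintype.card_sigma, Fintype.card_fin, colSupport, card_filter]
  rw [Fintype.sum_prod_type_right]

theorem natCast_card_entry_at [DecidableEq β] (j : β) (c : Fin m) :
    (#{n : Entry Y | j = entryRow n ∧ c = n.1} : ZMod 2) = Y j c := by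
  rw [natCast_card_filter, Fintype.sum_sigma,
    sum_eq_single c (fun c' _ hc' => by simp [hc'.symm]) (by simp)]
  simp only [and_true]
  rw [sum_entryRow_col c fun j' => if j = j' then (1 : ZMod 2) else 0, sum_ite_eq]
  simp only [colSupport, mem_filter, mem_univ, true_and]
  generalize Y j c = a
  revert a
  decide

def parentEntry (n : Entry Y) : Entry Y :=
  ⟨n.1, ⟨treeParent n.2, (treeParent_le _).trans_lt n.2.isLt⟩⟩

def fanLevel (e : ℕ) : Finset (Entry Y) :=
  univ.filter fun n => 2 ^ e ≤ n.2.val ∧ n.2.val < 2 ^ (e + 1)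

def fanned (e : ℕ) : Finset (Entry Y) :=
  univ.filter fun n => n.2.val ≠ 0 ∧ n.2.val < 2 ^ e

theorem rank_parentEntry_of_mem_fanLevel {e : ℕ} {n : Entry Y} (hn : n ∈ fanLevel e) :
    (parentEntry n).2.val = n.2.val - 2 ^ e := by
  simp only [fanLevel, mem_filter, mem_univ, true_and] at hn
  exact treeParent_eq_sub hn.1 hn.2

theorem rank_parentEntry_lt {e : ℕ} {n : Entry Y} (hn : n ∈ fanLevel e) :
    (parentEntry n).2.val < 2 ^ e := by
  have := rank_parentEntry_of_mem_fanLevel hn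
  simp only [fanLevel, mem_filter, mem_univ, true_and, pow_succ] at hn
  omega

theorem rank_eq_zero_or_mem_fanned {e : ℕ} {n : Entry Y} (h : n.2.val < 2 ^ e) :
    n.2.val = 0 ∨ n ∈ fanned e := by
  simp only [fanned, mem_filter, mem_univ, true_and]
  omega

theorem fanned_zero : fanned 0 = (∅ : Finset (Entry Y)) := by
  ext n
  simp only [fanned, pow_zero, mem_filter, mem_univ, true_and, notMem_empty, iff_false]
  omega

theorem fanned_succ (e : ℕ) : fanned (e + 1) = fanned e ∪ (fanLevel e : Finset (Entry Y)) := by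
  ext n
  have := Nat.one_le_two_pow (n := e)
  simp only [fanned, fanLevel, mem_union, mem_filter, mem_univ, true_and, pow_succ]
  omega

theorem disjoint_fanned_fanLevel (e : ℕ) :
    Disjoint (fanned e) (fanLevel e : Finset (Entry Y)) := by
  simp only [fanned, fanLevel, disjoint_filter]
  omega

def column (c : ℕ) : Finset (Entry Y) := univ.filter fun n => n.1.val = c

def columnsBelow (u : ℕ) : Finset (Entry Y) := univ.filter fun n => n.1.val < u

theorem columnsBelow_zero : columnsBelow 0 = (∅ : Finset (Entry Y)) := by
  ext n
  simp [columnsBelow]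

theorem columnsBelow_self : columnsBelow m = (univ : Finset (Entry Y)) := by
  ext n
  simp [columnsBelow]

theorem columnsBelow_succ (u : ℕ) :
    columnsBelow (u + 1) = columnsBelow u ∪ (column u : Finset (Entry Y)) := by
  ext n
  simp only [columnsBelow, column, mem_union, mem_filter, mem_univ, true_and]
  omega

theorem disjoint_columnsBelow_column (u : ℕ) :
    Disjoint (columnsBelow u) (column u : Finset (Entry Y)) := by
  simp only [columnsBelow, column, disjoint_filter]
  omega

end Entries

section Circuit

variable {m : ℕ} {β γ : Type} [Fintype β] {Y : Matrix β (Fin m) (ZMod 2)} (κ : Entry Y ↪ γ)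

abbrev Wire (m : ℕ) (β γ : Type) : Type := Fin m ⊕ (β ⊕ γ)

def src (n : Entry Y) : Wire m β γ :=
  if n.2.val = 0 then .inl n.1 else .inr (.inr (κ n))

theorem src_injective : Function.Injective (src κ) := by
  intro n n' h
  unfold src at h
  split_ifs at h with h₁ h₂ h₂
  · exact entry_ext (Sum.inl_injective h) (h₁.trans h₂.symm)
  · exact κ.injective (Sum.inr_injective (Sum.inr_injective h))

theorem src_ne_inr_inl (n : Entry Y) (j : β) : src κ n ≠ .inr (.inl j) := by
  unfold src
  split_ifs <;> simp

variable [DecidableEq β] [DecidableEq γ]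

def anc (n : Entry Y) : γ → ZMod 2 :=
  if h : n.2.val = 0 then 0 else Pi.single (κ n) 1 + anc (parentEntry n)
termination_by n.2.val
decreasing_by exact treeParent_lt h

/-- `e_c` plus the unit vectors of the ancillas on the tree path from rank `0` to `n`: the row held
by `src κ n` once it is loaded. -/
def srcRow (n : Entry Y) : Wire m β γ → ZMod 2 :=
  Sum.elim (Pi.single n.1 1) (Sum.elim 0 (anc κ n))

theorem srcRow_of_rank_eq_zero {n : Entry Y} (h : n.2.val = 0) :
    srcRow κ n = Pi.single (.inl n.1) 1 := by
  rw [srcRow, anc, dif_pos h]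
  ext (c | j | k) <;> simp [Pi.single_apply]

theorem srcRow_of_rank_ne_zero {n : Entry Y} (h : n.2.val ≠ 0) :
    srcRow κ n = Pi.single (.inr (.inr (κ n))) 1 + srcRow κ (parentEntry n) := by
  rw [srcRow, srcRow, anc, dif_neg h]
  ext (c | j | k) <;> simp [Pi.single_apply, parentEntry]

def ancillaLoad (F : Finset (Entry Y)) : Matrix (Wire m β γ) (Wire m β γ) (ZMod 2) :=
  ∑ n ∈ F, updateRow 0 (.inr (.inr (κ n))) (srcRow κ (parentEntry n))

noncomputable def targetLoad (M : Finset (Entry Y)) :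
    Matrix (Wire m β γ) (Wire m β γ) (ZMod 2) :=
  ∑ n ∈ M, updateRow 0 (.inr (.inl (entryRow n))) (srcRow κ n)

/-- The matrix after the ancillas of the entries in `F` have been loaded and the entries in `M`
have been added into their target rows. -/
noncomputable def state (F M : Finset (Entry Y)) : Matrix (Wire m β γ) (Wire m β γ) (ZMod 2) :=
  1 + ancillaLoad κ F + targetLoad κ M

theorem state_apply_inl (F M : Finset (Entry Y)) (c : Fin m) :
    state κ F M (.inl c) = Pi.single (.inl c) 1 := by
  ext y
  simp [state, ancillaLoad, targetLoad, Matrix.sum_apply, updateRow_apply, one_eq_pi_single]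

theorem state_apply_ancilla {F : Finset (Entry Y)} (M : Finset (Entry Y)) {n : Entry Y}
    (hn : n ∈ F) :
    state κ F M (.inr (.inr (κ n))) =
      Pi.single (.inr (.inr (κ n))) 1 + srcRow κ (parentEntry n) := by
  ext y
  simp [state, ancillaLoad, targetLoad, Matrix.sum_apply, updateRow_apply, one_eq_pi_single, hn]

theorem state_src {F : Finset (Entry Y)} (M : Finset (Entry Y)) {n : Entry Y}
    (hn : n.2.val = 0 ∨ n ∈ F) : state κ F M (src κ n) = srcRow κ n := by
  by_cases h0 : n.2.val = 0
  · rw [src, if_pos h0, state_apply_inl, srcRow_of_rank_eq_zero κ h0]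
  · rw [src, if_neg h0, state_apply_ancilla κ M (hn.resolve_left h0),
      srcRow_of_rank_ne_zero κ h0]

theorem state_empty_empty : state κ ∅ ∅ = 1 := by
  simp [state, ancillaLoad, targetLoad]

theorem state_fanned_succ (e : ℕ) (M : Finset (Entry Y)) :
    state κ (fanned (e + 1)) M = state κ (fanned e) M + ancillaLoad κ (fanLevel e) := by
  unfold state ancillaLoad
  rw [fanned_succ, sum_union (disjoint_fanned_fanLevel e)]
  abel

def fanLayer (e : ℕ) : Matrix (Wire m β γ) (Wire m β γ) (ZMod 2) :=
  layer (fanLevel e) (fun n => .inr (.inr (κ n))) (fun n => src κ (parentEntry n))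

noncomputable def targetLayer (c : ℕ) : Matrix (Wire m β γ) (Wire m β γ) (ZMod 2) :=
  layer (column c) (fun n => .inr (.inl (entryRow n))) (src κ)

theorem isParallelRowElim_fanLayer (e : ℕ) : IsParallelRowElim (fanLayer κ e) := by
  refine isParallelRowElim_layer _ (fun a ha b hb h => ?_)
    (Sum.inr_injective.comp (Sum.inr_injective.comp κ.injective)).injOn
    (fun a ha b hb h => ?_)
  · have hab := src_injective κ h
    have hrank := congrArg (fun n : Entry Y => n.2.val) hab
    simp only [rank_parentEntry_of_mem_fanLevel ha, rank_parentEntry_of_mem_fanLevel hb] at hrank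
    simp only [fanLevel, mem_coe, mem_filter, mem_univ, true_and] at ha hb
    have hcol := congrArg Sigma.fst hab
    exact entry_ext hcol (by omega)
  · unfold src at h
    split_ifs at h
    have hab : parentEntry a = b := κ.injective (Sum.inr_injective (Sum.inr_injective h))
    have hlt := rank_parentEntry_lt ha
    simp only [fanLevel, mem_filter, mem_univ, true_and] at hb
    rw [hab] at hlt
    omega

theorem isParallelRowElim_targetLayer (c : ℕ) : IsParallelRowElim (targetLayer κ c) := by
  refine isParallelRowElim_layer _ (src_injective κ).injOn (fun a ha b hb h => ?_)
    fun a _ b _ => src_ne_inr_inl κ a _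
  simp only [column, coe_filter, mem_univ, true_and, Set.mem_ofPred_eq] at ha hb
  exact entryRow_injective_of_col_eq (Fin.ext (ha.trans hb.symm))
    (Sum.inl_injective (Sum.inr_injective h))

noncomputable def residue : Matrix β γ (ZMod 2) :=
  of fun j k => ∑ n : Entry Y, if j = entryRow n then anc κ n k else 0

theorem state_empty_univ :
    state κ ∅ univ = fromBlocks 1 0 (fromRows Y 0) (fromBlocks 1 (residue κ) 0 1) := by
  ext (c | j | k) (c' | j' | k') <;>
    simp [state, ancillaLoad, targetLoad, Matrix.sum_apply, updateRow_apply, one_apply, srcRow,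
      residue, Pi.single_apply, ← ite_and, natCast_card_entry_at]

variable [Fintype γ]

theorem fanLayer_mul_state {e : ℕ} {F : Finset (Entry Y)} (M : Finset (Entry Y))
    (hF : ∀ n ∈ fanLevel e, (parentEntry n).2.val = 0 ∨ parentEntry n ∈ F) :
    fanLayer κ e * state κ F M = state κ F M + ancillaLoad κ (fanLevel e) := by
  rw [fanLayer, layer_mul, ancillaLoad]
  exact congrArg _ (sum_congr rfl fun n hn => by rw [state_src κ M (hF n hn)])

theorem fanLayer_mul_state_fanned (e : ℕ) (M : Finset (Entry Y)) :
    fanLayer κ e * state κ (fanned e) M = state κ (fanned (e + 1)) M := by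
  rw [fanLayer_mul_state κ M fun n hn => rank_eq_zero_or_mem_fanned (rank_parentEntry_lt hn),
    state_fanned_succ]

theorem fanLayer_mul_state_fanned_succ (e : ℕ) (M : Finset (Entry Y)) :
    fanLayer κ e * state κ (fanned (e + 1)) M = state κ (fanned e) M := by
  have hF (n : Entry Y) (hn : n ∈ fanLevel e) := rank_eq_zero_or_mem_fanned (e := e + 1)
    ((rank_parentEntry_lt hn).trans (Nat.pow_lt_pow_succ one_lt_two))
  rw [fanLayer_mul_state κ M hF, state_fanned_succ, add_assoc, add_eq_left]
  ext
  exact CharTwo.add_self_eq_zero _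

theorem targetLayer_mul_state {L : ℕ} (hL : ∀ c, #(colSupport Y c) ≤ 2 ^ L) (c : ℕ) :
    targetLayer κ c * state κ (fanned L) (columnsBelow c) =
      state κ (fanned L) (columnsBelow (c + 1)) := by
  have hF (n : Entry Y) : n.2.val = 0 ∨ n ∈ fanned L :=
    rank_eq_zero_or_mem_fanned (n.2.isLt.trans_le (hL n.1))
  rw [targetLayer, layer_mul,
    sum_congr rfl fun n _ => congrArg (updateRow 0 _) (state_src κ _ (hF n))]
  unfold state targetLoad
  rw [columnsBelow_succ, sum_union (disjoint_columnsBelow_column c)]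
  abel

theorem fanout_prod_mul_state (L : ℕ) (M : Finset (Entry Y)) :
    (List.ofFn fun e : Fin L => fanLayer κ e).reverse.prod * state κ ∅ M =
      state κ (fanned L) M := by
  rw [← fanned_zero]
  exact reverse_ofFn_prod_mul_eq _ (fun e => state κ (fanned e) M)
    fun e => fanLayer_mul_state_fanned κ e M

theorem fanin_prod_mul_state (L : ℕ) (M : Finset (Entry Y)) :
    (List.ofFn fun l : Fin L => fanLayer κ (L - 1 - l)).reverse.prod * state κ (fanned L) M =
      state κ ∅ M := by
  have h := reverse_ofFn_prod_mul_eq _ (fun l => state κ (fanned (L - l)) M) fun l : Fin L => by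
    rw [show L - l = L - 1 - l + 1 by omega, show L - (l + 1) = L - 1 - l by omega]
    exact fanLayer_mul_state_fanned_succ κ _ M
  simpa [fanned_zero] using h

theorem target_prod_mul_state {L : ℕ} (hL : ∀ c, #(colSupport Y c) ≤ 2 ^ L) :
    (List.ofFn fun c : Fin m => targetLayer κ c).reverse.prod * state κ (fanned L) ∅ =
      state κ (fanned L) univ := by
  rw [← columnsBelow_zero, ← columnsBelow_self]
  exact reverse_ofFn_prod_mul_eq _ (fun u => state κ (fanned L) (columnsBelow u))
    fun c => targetLayer_mul_state κ hL c

end Circuit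

theorem exists_parallelRowElim_prod_eq_fromBlocks {m L : ℕ} {β γ : Type} [Fintype β]
    [DecidableEq β] [Fintype γ] [DecidableEq γ] (Y : Matrix β (Fin m) (ZMod 2))
    (hL : ∀ c, #(colSupport Y c) ≤ 2 ^ L)
    (hγ : #(univ.filter fun p : β × Fin m => Y p.1 p.2 ≠ 0) ≤ Fintype.card γ) :
    ∃ (E : Matrix β γ (ZMod 2))
      (R : Fin (L + m + L) → Matrix (Wire m β γ) (Wire m β γ) (ZMod 2)),
      (∀ k, IsParallelRowElim (R k)) ∧
      (List.ofFn R).reverse.prod = fromBlocks 1 0 (fromRows Y 0) (fromBlocks 1 E 0 1) := by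
  obtain ⟨κ⟩ : Nonempty (Entry Y ↪ γ) :=
    Function.Embedding.nonempty_of_card_le (card_entry.trans_le hγ)
  let fanout (e : Fin L) := fanLayer κ e
  let targets (c : Fin m) := targetLayer κ c
  let fanin (l : Fin L) := fanLayer κ (L - 1 - l)
  refine ⟨residue κ, Fin.append (Fin.append fanout targets) fanin, fun k => ?_, ?_⟩
  · refine Fin.addCases (Fin.addCases (fun e => ?_) fun c => ?_) (fun l => ?_) k <;>
      simp only [Fin.append_left, Fin.append_right, fanout, targets, fanin,
        isParallelRowElim_fanLayer, isParallelRowElim_targetLayer]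
  calc (List.ofFn (Fin.append (Fin.append fanout targets) fanin)).reverse.prod
      = (List.ofFn fanin).reverse.prod * ((List.ofFn targets).reverse.prod *
          ((List.ofFn fanout).reverse.prod * state κ ∅ ∅)) := by
        simp only [List.ofFn_fin_append, List.reverse_append, List.prod_append, state_empty_empty,
          mul_one]
    _ = state κ ∅ univ := by
        rw [fanout_prod_mul_state, target_prod_mul_state κ hL, fanin_prod_mul_state]
    _ = _ := state_empty_univ κ

end CnotSynthesis

open CnotSynthesis in
theorem cnot_construct_sparse_slim :
    ∃ C : ℝ, 0 < C ∧ ∀ m : ℕ, 1 ≤ m →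
    ∀ t : ℕ, 1 ≤ t → t ≤ m * 2 ^ m →
    ∀ Y : Matrix (Fin (2 ^ m)) (Fin m) (ZMod 2),
    (Finset.univ.filter (fun p : Fin (2 ^ m) × Fin m => Y p.1 p.2 ≠ 0)).card ≤ t →
    ∃ (E : Matrix (Fin (2 ^ m)) (Fin t) (ZMod 2)) (d : ℕ),
      (d : ℝ) ≤ C * (m : ℝ) ∧
      ∃ R : Fin d → Matrix (Fin m ⊕ (Fin (2 ^ m) ⊕ Fin t))
          (Fin m ⊕ (Fin (2 ^ m) ⊕ Fin t)) (ZMod 2),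
        (∀ k, IsParallelRowElim (R k)) ∧
        ((List.ofFn R).reverse).prod =
          Matrix.fromBlocks 1 0 (Matrix.fromRows Y 0) (Matrix.fromBlocks 1 E 0 1) := by
  refine ⟨3, three_pos, fun m _ t _ _ Y hY => ?_⟩
  have hcol (c : Fin m) : #(colSupport Y c) ≤ 2 ^ m :=
    (card_filter_le _ _).trans_eq (card_fin _)
  obtain ⟨E, R, hR, hprod⟩ :=
    exists_parallelRowElim_prod_eq_fromBlocks (γ := Fin t) Y hcol (by simpa using hY)
  exact ⟨E, m + m + m, by push_cast; linarith, R, hR, hprod⟩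
end

section
/- For every integer n ≥ 1 and every invertible matrix M ∈ GL(n, F₂), there exist a natural number d ≤ 4n and parallel row-elimination matrices R₁, …, R_d ∈ F₂^{n×n} such that R_d ⋯ R₂R₁M = I. -/
/-!
Every invertible `M` over `𝔽₂` has a ULU decomposition `U₁ M U₂ = L`, with `U₁, U₂` upper and `L`
lower triangular (hence unitriangular, being invertible over `𝔽₂`), built by pivoting on the
smallest index; then `M⁻¹ = U₂ L⁻¹ U₁`. A unitriangular matrix on `n` indices splits, along its
first `h = ⌈n/2⌉` indices and the rest, as `[[A, C], [0, D]] = diag(A, D) * [[1, X], [0, 1]]`.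
The blocks `A` and `D` act on disjoint rows, so their layers run side by side, and `1 + X` takes
`h` layers: layer `g` adds row `j` to row `i` for the entries `(i, j)` of `X` with
`c j = r i + g` modulo `h`, where `r` and `c` label the rows and the columns of `X` injectively.
A triangular matrix thus needs `f(n) = f(⌈n/2⌉) + ⌈n/2⌉` layers, and `3 f(n) ≤ 4 n`.
-/

open Matrix

open Finset Function

theorem ZMod.eq_one_of_ne_zero_mod_two {x : ZMod 2} (hx : x ≠ 0) : x = 1 := by
  revert x; decide

theorem List.prod_ofFn_one_add {R : Type*} [Semiring R] {m : ℕ} (N : Fin m → R)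
    (h : ∀ i j, N i * N j = 0) : (List.ofFn fun i => 1 + N i).prod = 1 + ∑ i, N i := by
  induction m with
  | zero => simp
  | succ m ih =>
    have h0 : N 0 * ∑ i : Fin m, N i.succ = 0 := by
      rw [Finset.mul_sum]; exact Finset.sum_eq_zero fun i _ => h _ _
    rw [List.ofFn_succ, List.prod_cons, ih _ fun i j => h _ _, Fin.sum_univ_succ, mul_add,
      mul_one, add_mul, one_mul, h0, add_zero, add_assoc]

theorem Finset.exists_initial_subset_card_eq {α β : Type*} [DecidableEq α] [LinearOrder β]
    {b : α → β} (hb : Injective b) (S : Finset α) {k : ℕ} (hk : k ≤ #S) :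
    ∃ T ⊆ S, #T = k ∧ ∀ x ∈ T, ∀ y ∈ S \ T, b x < b y := by
  induction k with
  | zero => exact ⟨∅, empty_subset _, card_empty, by simp⟩
  | succ k ih =>
    obtain ⟨T, hTS, hT, hlt⟩ := ih (by omega)
    have hne : (S \ T).Nonempty := by
      rw [← card_pos, card_sdiff_of_subset hTS]; omega
    obtain ⟨m, hm, hmin⟩ := exists_min_image (S \ T) b hne
    refine ⟨insert m T, insert_subset (mem_sdiff.1 hm).1 hTS,
      by rw [card_insert_of_notMem (mem_sdiff.1 hm).2, hT], ?_⟩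
    intro x hx y hy
    rw [sdiff_insert] at hy
    obtain rfl | hx := mem_insert.1 hx
    · exact (hmin y (mem_of_mem_erase hy)).lt_of_ne (hb.ne (ne_of_mem_erase hy).symm)
    · exact hlt x hx y (mem_of_mem_erase hy)

def triangularDepth : ℕ → ℕ
  | 0 => 0
  | 1 => 0
  | n + 2 => triangularDepth ((n + 3) / 2) + (n + 3) / 2

theorem triangularDepth_of_two_le {n : ℕ} (hn : 2 ≤ n) :
    triangularDepth n = triangularDepth ((n + 1) / 2) + (n + 1) / 2 := by
  obtain ⟨m, rfl⟩ := Nat.exists_eq_add_of_le' hn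
  rw [triangularDepth]

theorem three_mul_triangularDepth_le (n : ℕ) : 3 * triangularDepth n ≤ 4 * n := by
  induction n using Nat.strong_induction_on with
  | _ n ih =>
    rcases Nat.lt_or_ge n 7 with hn | hn
    · interval_cases n <;> simp [triangularDepth_of_two_le, triangularDepth]
    rw [triangularDepth_of_two_le (by omega)]
    have := ih ((n + 1) / 2) (by omega)
    omega

namespace Matrix

variable {ι : Type} {R : Type*}

section Support

variable {s t s' t' : Finset ι}

def SupportedIn [Zero R] (s t : Finset ι) (N : Matrix ι ι R) : Prop :=
  ∀ i j, N i j ≠ 0 → i ∈ s ∧ j ∈ t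

section Zero

variable [Zero R] {N : Matrix ι ι R}

theorem supportedIn_zero : (0 : Matrix ι ι R).SupportedIn s t :=
  fun _ _ h => absurd rfl h

theorem supportedIn_univ [Fintype ι] (N : Matrix ι ι R) : N.SupportedIn univ univ :=
  fun _ _ _ => ⟨mem_univ _, mem_univ _⟩

theorem supportedIn_single [DecidableEq ι] (i j : ι) (c : R) :
    (single i j c).SupportedIn {i} {j} := by
  intro i' j' h
  by_contra hc
  simp_all [single_apply]

theorem SupportedIn.mono (h : N.SupportedIn s t) (hs : s ⊆ s') (ht : t ⊆ t') :
    N.SupportedIn s' t' :=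
  fun i j hij => ⟨hs (h i j hij).1, ht (h i j hij).2⟩

theorem SupportedIn.of_rows_of_cols [Fintype ι] (h : N.SupportedIn s univ)
    (h' : N.SupportedIn univ t) : N.SupportedIn s t :=
  fun i j hij => ⟨(h i j hij).1, (h' i j hij).2⟩

theorem SupportedIn.blockTriangular {α : Type*} [LT α] {b : ι → α} (h : N.SupportedIn s t)
    (hst : ∀ i ∈ s, ∀ j ∈ t, ¬ b j < b i) : N.BlockTriangular b := by
  intro i j hij
  by_contra hN
  exact hst i (h i j hN).1 j (h i j hN).2 hij

end Zero

section AddGroup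

variable [AddGroup R] {N N' : Matrix ι ι R}

theorem SupportedIn.add (h : N.SupportedIn s t) (h' : N'.SupportedIn s t) :
    (N + N').SupportedIn s t := by
  intro i j hij
  by_cases hN : N i j = 0
  · exact h' i j (by simpa [hN] using hij)
  · exact h i j hN

theorem SupportedIn.neg (h : N.SupportedIn s t) : (-N).SupportedIn s t :=
  fun i j hij => h i j (by simpa using hij)

theorem SupportedIn.sub (h : N.SupportedIn s t) (h' : N'.SupportedIn s t) :
    (N - N').SupportedIn s t := by
  rw [sub_eq_add_neg]; exact h.add h'.neg

end AddGroup

variable [Fintype ι] [NonUnitalNonAssocSemiring R] {N N' : Matrix ι ι R}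

theorem SupportedIn.mul (h : N.SupportedIn s t) (h' : N'.SupportedIn s' t') :
    (N * N').SupportedIn s t' := by
  intro i j hij
  obtain ⟨k, -, hk⟩ := exists_ne_zero_of_sum_ne_zero hij
  exact ⟨(h i k (left_ne_zero_of_mul hk)).1, (h' k j (right_ne_zero_of_mul hk)).2⟩

theorem SupportedIn.mul_eq_zero (h : N.SupportedIn s t) (h' : N'.SupportedIn s' t')
    (hd : Disjoint t s') : N * N' = 0 := by
  ext i j
  refine sum_eq_zero fun k _ => ?_
  by_contra hk
  exact disjoint_left.1 hd (h i k (left_ne_zero_of_mul hk)).2 (h' k j (right_ne_zero_of_mul hk)).1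

end Support

section IdOutside

variable [Ring R] [DecidableEq ι] {s t S T B : Finset ι} {N M M' : Matrix ι ι R}

def IdOutside (S : Finset ι) (M : Matrix ι ι R) : Prop := (M - 1).SupportedIn S S

theorem idOutside_univ [Fintype ι] (M : Matrix ι ι R) : M.IdOutside univ := supportedIn_univ _

theorem idOutside_one : (1 : Matrix ι ι R).IdOutside S := by
  rw [IdOutside, sub_self]; exact supportedIn_zero

theorem IdOutside.mono (h : M.IdOutside S) (hS : S ⊆ T) : M.IdOutside T :=
  SupportedIn.mono h hS hS

theorem IdOutside.apply (h : M.IdOutside S) {i j : ι} (hij : i ∉ S ∨ j ∉ S) :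
    M i j = (1 : Matrix ι ι R) i j := by
  by_contra hne
  have := h i j (sub_ne_zero.2 hne)
  tauto

theorem IdOutside.eq_one_of_card_le_one (hS : M.IdOutside S) (hcard : #S ≤ 1)
    (hdiag : ∀ i, M i i = 1) : M = 1 := by
  ext i j
  by_cases hij : i = j
  · rw [hij, hdiag, one_apply_eq]
  · exact hS.apply (not_and_or.1 fun h => hij (card_le_one.1 hcard i h.1 j h.2))

variable [Fintype ι]

theorem IdOutside.mul (h : M.IdOutside S) (h' : M'.IdOutside S) : (M * M').IdOutside S := by
  have : M * M' - 1 = (M - 1) * (M' - 1) + (M - 1) + (M' - 1) := by noncomm_ring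
  rw [IdOutside, this]
  exact ((SupportedIn.mul h h').add h).add h'

theorem IdOutside.mul_eq_add_sub (h : M.IdOutside T) (h' : M'.IdOutside B) (hd : Disjoint T B) :
    M * M' = M + M' - 1 := by
  have : M * M' = (M - 1) * (M' - 1) + M + M' - 1 := by noncomm_ring
  rw [this, SupportedIn.mul_eq_zero h h' hd, zero_add]

theorem IdOutside.commute (h : M.IdOutside T) (h' : M'.IdOutside B) (hd : Disjoint T B) :
    Commute M M' := by
  rw [Commute, SemiconjBy, h.mul_eq_add_sub h' hd, h'.mul_eq_add_sub h hd.symm, add_comm M]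

theorem IdOutside.mul_eq_of_disjoint (h : M.IdOutside S) (hN : N.SupportedIn s t)
    (hd : Disjoint S s) : M * N = N := by
  rw [← sub_eq_zero, ← sub_one_mul]; exact SupportedIn.mul_eq_zero h hN hd

theorem SupportedIn.mul_eq_of_disjoint (hN : N.SupportedIn s t) (h : M.IdOutside S)
    (hd : Disjoint t S) : N * M = N := by
  rw [← sub_eq_zero, ← mul_sub_one]; exact hN.mul_eq_zero h hd

end IdOutside

section Layer

/-- The nonzero entries `(i, j)` of `N` are the (target, control) pairs of one layer of CNOT gates:
no two of them share a row or a column, and no target is also a control. -/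
def IsDisjointMatching [Zero R] (N : Matrix ι ι R) : Prop :=
  ∀ i j i' j', N i j ≠ 0 → N i' j' ≠ 0 → (i = i' ↔ j = j') ∧ i ≠ j'

variable {S T B : Finset ι}

theorem isDisjointMatching_zero [Zero R] : (0 : Matrix ι ι R).IsDisjointMatching :=
  fun _ _ _ _ h => absurd rfl h

theorem IsDisjointMatching.add [AddZeroClass R] {N N' : Matrix ι ι R} (h : N.IsDisjointMatching)
    (h' : N'.IsDisjointMatching) (hN : N.SupportedIn T T) (hN' : N'.SupportedIn B B)
    (hd : Disjoint T B) : (N + N').IsDisjointMatching := by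
  have hsplit : ∀ i j, (N + N') i j ≠ 0 →
      (N i j ≠ 0 ∧ i ∈ T ∧ j ∈ T) ∨ (N' i j ≠ 0 ∧ i ∈ B ∧ j ∈ B) := by
    intro i j hij
    by_cases h0 : N i j = 0
    · have h0' : N' i j ≠ 0 := by simpa [h0] using hij
      exact Or.inr ⟨h0', hN' i j h0'⟩
    · exact Or.inl ⟨h0, hN i j h0⟩
  have hne : ∀ x ∈ T, ∀ y ∈ B, x ≠ y := fun x hx y hy hxy => disjoint_left.1 hd hx (hxy ▸ hy)
  intro i j i' j' hij hij'
  rcases hsplit i j hij with ⟨h₁, hi, hj⟩ | ⟨h₁, hi, hj⟩ <;>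
    rcases hsplit i' j' hij' with ⟨h₂, hi', hj'⟩ | ⟨h₂, hi', hj'⟩
  · exact h i j i' j' h₁ h₂
  · exact ⟨iff_of_false (hne i hi i' hi') (hne j hj j' hj'), hne i hi j' hj'⟩
  · exact ⟨iff_of_false (hne i' hi' i hi).symm (hne j' hj' j hj).symm, (hne j' hj' i hi).symm⟩
  · exact h' i j i' j' h₁ h₂

variable [DecidableEq ι]

theorem IsDisjointMatching.isParallelRowElim [Fintype ι] {N : Matrix ι ι (ZMod 2)}
    (h : N.IsDisjointMatching) : IsParallelRowElim (1 + N) := by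
  set P := univ.filter fun p : ι × ι => N p.1 p.2 ≠ 0
  have hP : ∀ p : P, N p.1.1 p.1.2 ≠ 0 := fun p => (mem_filter.1 p.2).2
  let e := P.equivFin.symm
  refine Or.inr ⟨#P, fun k => (e k).1.2, fun k => (e k).1.1, ?_, ?_⟩
  · have he : ∀ k k', (e k).1 = (e k').1 → k = k' := fun k k' hkk' =>
      e.injective (Subtype.ext hkk')
    rintro (k | k) (k' | k') hkk' <;> simp only [Sum.elim_inl, Sum.elim_inr] at hkk'
    · exact congrArg _ (he k k' (Prod.ext ((h _ _ _ _ (hP (e k)) (hP (e k'))).1.2 hkk') hkk'))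
    · exact absurd hkk'.symm (h _ _ _ _ (hP (e k')) (hP (e k))).2
    · exact absurd hkk' (h _ _ _ _ (hP (e k)) (hP (e k'))).2
    · exact congrArg _ (he k k' (Prod.ext hkk' ((h _ _ _ _ (hP (e k)) (hP (e k'))).1.1 hkk')))
  · congr 1
    rw [Equiv.sum_comp e (fun p : P => single p.1.1 p.1.2 (1 : ZMod 2)),
      sum_coe_sort P (fun p => single p.1 p.2 (1 : ZMod 2))]
    conv_lhs => rw [matrix_eq_sum_single N, ← Fintype.sum_prod_type']
    rw [← sum_filter_of_ne (p := fun p : ι × ι => N p.1 p.2 ≠ 0)]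
    · refine sum_congr rfl fun p hp => ?_
      rw [ZMod.eq_one_of_ne_zero_mod_two (mem_filter.1 hp).2]
    · intro p _ hp h0
      exact hp (by rw [h0, single_zero])

variable [Ring R] {A A' : Matrix ι ι R}

def IsLayerOn (S : Finset ι) (A : Matrix ι ι R) : Prop :=
  A.IdOutside S ∧ (A - 1).IsDisjointMatching

theorem isLayerOn_one : (1 : Matrix ι ι R).IsLayerOn S :=
  ⟨idOutside_one, by rw [sub_self]; exact isDisjointMatching_zero⟩

theorem IsLayerOn.isParallelRowElim [Fintype ι] {A : Matrix ι ι (ZMod 2)} (h : A.IsLayerOn S) :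
    IsParallelRowElim A := by
  simpa using h.2.isParallelRowElim

theorem IsLayerOn.mul_of_disjoint [Fintype ι] (h : A.IsLayerOn T) (h' : A'.IsLayerOn B)
    (hd : Disjoint T B) : (A * A').IsLayerOn (T ∪ B) := by
  refine ⟨(h.1.mono subset_union_left).mul (h'.1.mono subset_union_right), ?_⟩
  rw [h.1.mul_eq_add_sub h'.1 hd, show A + A' - 1 - 1 = (A - 1) + (A' - 1) by abel]
  exact h.2.add h'.2 h.1 h'.1 hd

end Layer

section ProdOfLayers

variable [Ring R] [Fintype ι] [DecidableEq ι] {S T B : Finset ι} {d d' : ℕ}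
  {M M' : Matrix ι ι R}

def IsProdOfLayers (S : Finset ι) (d : ℕ) (M : Matrix ι ι R) : Prop :=
  ∃ l : List (Matrix ι ι R), l.length = d ∧ (∀ A ∈ l, A.IsLayerOn S) ∧ l.prod = M

theorem isProdOfLayers_one (S : Finset ι) (d : ℕ) : (1 : Matrix ι ι R).IsProdOfLayers S d :=
  ⟨List.replicate d 1, List.length_replicate,
    fun _ hA => List.eq_of_mem_replicate hA ▸ isLayerOn_one, by simp⟩

theorem IsProdOfLayers.mul (h : M.IsProdOfLayers S d) (h' : M'.IsProdOfLayers S d') :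
    (M * M').IsProdOfLayers S (d + d') := by
  obtain ⟨l, rfl, hl, rfl⟩ := h
  obtain ⟨l', rfl, hl', rfl⟩ := h'
  exact ⟨l ++ l', List.length_append, fun A hA => (List.mem_append.1 hA).elim (hl A) (hl' A),
    List.prod_append⟩

theorem IsProdOfLayers.mul_of_disjoint (h : M.IsProdOfLayers T d) (h' : M'.IsProdOfLayers B d)
    (hd : Disjoint T B) : (M * M').IsProdOfLayers (T ∪ B) d := by
  obtain ⟨l, hl, hlT, rfl⟩ := h
  obtain ⟨l', hl', hlB, rfl⟩ := h'
  subst hl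
  induction l generalizing l' with
  | nil =>
    obtain rfl : l' = [] := List.eq_nil_of_length_eq_zero hl'
    exact ⟨[], rfl, by simp, by simp⟩
  | cons A l ih =>
    obtain _ | ⟨A', l'⟩ := l'
    · simp at hl'
    simp only [List.length_cons, List.mem_cons, forall_eq_or_imp, add_left_inj] at *
    obtain ⟨L, hL, hLS, hLprod⟩ := ih hlT.2 l' hlB.2 hl'
    have hcomm : Commute A' l.prod :=
      Commute.list_prod_right _ _ fun C hC => hlB.1.1.commute (hlT.2 C hC).1 hd.symm
    refine ⟨A * A' :: L, by simp [hL], ?_, ?_⟩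
    · simp only [List.mem_cons, forall_eq_or_imp]
      exact ⟨hlT.1.mul_of_disjoint hlB.1 hd, hLS⟩
    · rw [List.prod_cons, List.prod_cons, List.prod_cons, hLprod, mul_assoc, mul_assoc,
        ← mul_assoc A', hcomm.eq, mul_assoc]

theorem isProdOfLayers_one_add (h : ℕ) [NeZero h] {s t : Finset ι} (hd : Disjoint s t)
    (hs : #s ≤ h) (ht : #t ≤ h) {X : Matrix ι ι R} (hX : X.SupportedIn s t) :
    (1 + X).IsProdOfLayers (s ∪ t) h := by
  obtain ⟨r, hr⟩ := Set.exists_injOn_iff_injective.2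
    ⟨_, (Fin.castLE_injective hs).comp s.equivFin.injective⟩
  obtain ⟨c, hc⟩ := Set.exists_injOn_iff_injective.2
    ⟨_, (Fin.castLE_injective ht).comp t.equivFin.injective⟩
  let N : Fin h → Matrix ι ι R := fun g => of fun i j => if c j = r i + g then X i j else 0
  have hN : ∀ g i j, N g i j ≠ 0 → c j = r i + g ∧ X i j ≠ 0 := by
    intro g i j hij
    by_cases hg : c j = r i + g
    · exact ⟨hg, by simpa [N, hg] using hij⟩
    · simp [N, hg] at hij
  have hNX : ∀ g, (N g).SupportedIn s t := fun g i j hij => hX i j (hN g i j hij).2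
  have hmatch : ∀ g, (N g).IsDisjointMatching := by
    intro g i j i' j' hij hij'
    obtain ⟨hg, hX₁⟩ := hN g i j hij
    obtain ⟨hg', hX₂⟩ := hN g i' j' hij'
    refine ⟨⟨fun hii' => hc (hX i j hX₁).2 (hX i' j' hX₂).2 (by rw [hg, hg', hii']),
      fun hjj' => hr (hX i j hX₁).1 (hX i' j' hX₂).1 (add_right_cancel (hg.symm.trans
        (hjj' ▸ hg')))⟩, fun hij'' => disjoint_left.1 hd (hX i j hX₁).1 (hij'' ▸ (hX i' j' hX₂).2)⟩
  refine ⟨List.ofFn fun g => 1 + N g, List.length_ofFn, ?_, ?_⟩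
  · simp only [List.mem_ofFn, forall_exists_index]
    rintro _ g rfl
    refine ⟨?_, by rw [add_sub_cancel_left]; exact hmatch g⟩
    rw [IdOutside, add_sub_cancel_left]
    exact (hNX g).mono subset_union_left subset_union_right
  · rw [List.prod_ofFn_one_add _ fun g g' => (hNX g).mul_eq_zero (hNX g') hd.symm]
    congr 1
    ext i j
    simp only [N, sum_apply, of_apply, ← sub_eq_iff_eq_add']
    simp

end ProdOfLayers

section PrincipalBlock

variable [Ring R] [DecidableEq ι] {α : Type*} [LinearOrder α] {b : ι → α} {S T B : Finset ι}
  {M : Matrix ι ι R}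

def principalBlock (S : Finset ι) (M : Matrix ι ι R) : Matrix ι ι R :=
  of fun i j => if i ∈ S ∧ j ∈ S then M i j else (1 : Matrix ι ι R) i j

theorem idOutside_principalBlock : (M.principalBlock S).IdOutside S := by
  intro i j hij
  by_contra h
  simp [principalBlock, h] at hij

theorem BlockTriangular.principalBlock (hM : M.BlockTriangular b) :
    (M.principalBlock S).BlockTriangular b := by
  intro i j hij
  simp only [Matrix.principalBlock, of_apply]
  split_ifs
  · exact hM hij
  · exact blockTriangular_one hij

theorem principalBlock_apply_self (hdiag : ∀ i, M i i = 1) (i : ι) :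
    M.principalBlock S i i = 1 := by
  simp [principalBlock, hdiag]

theorem sub_principalBlock_mul_supportedIn [Fintype ι] (hM : M.IdOutside (T ∪ B))
    (hBT : ∀ i ∈ B, ∀ j ∈ T, M i j = 0) (hd : Disjoint T B) :
    (M - M.principalBlock T * M.principalBlock B).SupportedIn T B := by
  intro i j hij
  rw [idOutside_principalBlock.mul_eq_add_sub idOutside_principalBlock hd] at hij
  have hTB : ∀ x ∈ T, x ∉ B := fun x hx => disjoint_left.1 hd hx
  by_contra hc
  apply hij
  by_cases hiT : i ∈ T <;> by_cases hjT : j ∈ T <;> by_cases hiB : i ∈ B <;>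
    by_cases hjB : j ∈ B <;>
    simp_all [principalBlock, hM.apply, one_apply]

end PrincipalBlock

section Triangular

variable [CommRing R] [Fintype ι] [DecidableEq ι] {α : Type*} [LinearOrder α] {b : ι → α}
  {S T B : Finset ι} {M : Matrix ι ι R}

theorem BlockTriangular.det_eq_prod_diag (hb : Injective b) (hM : M.BlockTriangular b) :
    M.det = ∏ i, M i i := by
  let : LinearOrder ι := LinearOrder.lift' b hb
  exact det_of_isUpperTriangular fun i j hij => hM hij

theorem BlockTriangular.isUnit_of_diag_eq_one (hb : Injective b) (hM : M.BlockTriangular b)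
    (hdiag : ∀ i, M i i = 1) : IsUnit M := by
  rw [isUnit_iff_isUnit_det, hM.det_eq_prod_diag hb, prod_eq_one fun i _ => hdiag i]
  exact isUnit_one

theorem BlockTriangular.diag_eq_one_of_isUnit {M : Matrix ι ι (ZMod 2)} (hb : Injective b)
    (hM : M.BlockTriangular b) (hu : IsUnit M) (i : ι) : M i i = 1 := by
  rw [isUnit_iff_isUnit_det, hM.det_eq_prod_diag hb, isUnit_iff_ne_zero, prod_ne_zero_iff] at hu
  exact ZMod.eq_one_of_ne_zero_mod_two (hu i (mem_univ i))

theorem exists_eq_principalBlock_mul_principalBlock_mul (hb : Injective b)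
    (hS : M.IdOutside (T ∪ B)) (hM : M.BlockTriangular b) (hdiag : ∀ i, M i i = 1)
    (hd : Disjoint T B) (hlt : ∀ i ∈ T, ∀ j ∈ B, b i < b j) :
    ∃ X : Matrix ι ι R, X.SupportedIn T B ∧
      M = M.principalBlock T * M.principalBlock B * (1 + X) := by
  set A := M.principalBlock T
  set C := M - A * M.principalBlock B
  have hC : C.SupportedIn T B :=
    sub_principalBlock_mul_supportedIn hS (fun i hi j hj => hM (hlt j hj i hi)) hd
  have hAX : A * (A⁻¹ * C) = C := mul_nonsing_inv_cancel_left A C <| (isUnit_iff_isUnit_det A).1 <|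
    hM.principalBlock.isUnit_of_diag_eq_one hb (principalBlock_apply_self hdiag)
  have hX : (A⁻¹ * C).SupportedIn T B := by
    refine SupportedIn.of_rows_of_cols ?_ ((supportedIn_univ _).mul hC)
    rw [show A⁻¹ * C = C - (A - 1) * (A⁻¹ * C) by rw [sub_one_mul, hAX, sub_sub_cancel]]
    exact (hC.mono subset_rfl (subset_univ _)).sub
      (SupportedIn.mul idOutside_principalBlock (supportedIn_univ _))
  refine ⟨A⁻¹ * C, hX, ?_⟩
  rw [mul_add, mul_one, mul_assoc, idOutside_principalBlock.mul_eq_of_disjoint hX hd.symm, hAX,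
    add_sub_cancel]

theorem isProdOfLayers_triangularDepth (hb : Injective b) (n : ℕ) :
    ∀ (S : Finset ι) (M : Matrix ι ι R), #S ≤ n → M.IdOutside S → M.BlockTriangular b →
      (∀ i, M i i = 1) → M.IsProdOfLayers S (triangularDepth n) := by
  induction n using Nat.strong_induction_on with
  | _ n ih =>
  intro S M hSn hS hM hdiag
  rcases Nat.lt_or_ge n 2 with hn | hn
  · rw [hS.eq_one_of_card_le_one (by omega) hdiag]
    exact isProdOfLayers_one _ _
  set h := (n + 1) / 2
  have : NeZero h := ⟨by omega⟩
  obtain ⟨T, hTS, hT, hlt⟩ := S.exists_initial_subset_card_eq hb (min_le_right h #S)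
  have hST : T ∪ (S \ T) = S := union_sdiff_of_subset hTS
  have hd : Disjoint T (S \ T) := disjoint_sdiff
  have hTh : #T ≤ h := hT ▸ min_le_left _ _
  have hBh : #(S \ T) ≤ h := by rw [card_sdiff_of_subset hTS, hT]; omega
  obtain ⟨X, hX, hMX⟩ := exists_eq_principalBlock_mul_principalBlock_mul hb (by rwa [hST]) hM
    hdiag hd hlt
  have hA := ih h (by omega) T _ hTh idOutside_principalBlock hM.principalBlock
    (principalBlock_apply_self hdiag)
  have hD := ih h (by omega) (S \ T) _ hBh idOutside_principalBlock hM.principalBlock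
    (principalBlock_apply_self hdiag)
  have hMS := (hA.mul_of_disjoint hD hd).mul (isProdOfLayers_one_add h hd hTh hBh hX)
  rwa [hST, ← hMX, ← triangularDepth_of_two_le hn] at hMS

theorem BlockTriangular.isProdOfLayers_univ {N : Matrix ι ι (ZMod 2)} (hb : Injective b)
    (hN : N.BlockTriangular b) (hu : IsUnit N) :
    N.IsProdOfLayers univ (triangularDepth (Fintype.card ι)) :=
  isProdOfLayers_triangularDepth hb _ univ N card_univ.le (idOutside_univ N) hN
    (hN.diag_eq_one_of_isUnit hb hu)

end Triangular

section Factor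

variable [Ring R] [Fintype ι] [DecidableEq ι] {a : ι} {r s : Finset ι}

theorem exists_eq_one_add_mul {M : Matrix ι ι R} (has : a ∉ s) (hM : M.IdOutside (insert a s))
    (hrow : ∀ y, M a y = (1 : Matrix ι ι R) a y) :
    ∃ P M₀ : Matrix ι ι R, P.SupportedIn s {a} ∧ M₀.IdOutside s ∧ M = (1 + P) * M₀ := by
  have hrows : (M - 1).SupportedIn s univ := by
    intro i j hij
    refine ⟨(mem_insert.1 (hM i j hij).1).resolve_left ?_, mem_univ j⟩
    rintro rfl
    exact hij (by rw [sub_apply, hrow, sub_self])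
  set P : Matrix ι ι R := updateCol 0 a fun i => (M - 1) i a
  have hP : P.SupportedIn s {a} := by
    intro i j hij
    simp only [P, updateCol_apply, zero_apply] at hij
    split_ifs at hij with hj
    · exact ⟨(hrows i a hij).1, mem_singleton.2 hj⟩
    · exact absurd rfl hij
  refine ⟨P, M - P, hP, ?_, ?_⟩
  · intro i j hij
    by_cases hj : j = a
    · subst hj
      simp [P] at hij
    · have hij' : (M - 1) i j ≠ 0 := by simpa [P, hj] using hij
      exact ⟨(hrows i j hij').1, (mem_insert.1 (hM i j hij').2).resolve_left hj⟩
  · have hPM : P * (M - 1) = 0 := hP.mul_eq_zero hrows (disjoint_singleton_left.2 has)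
    have hPP : P * P = 0 := hP.mul_eq_zero hP (disjoint_singleton_left.2 has)
    have : (1 + P) * (M - P) = M + P * (M - 1) - P * P := by noncomm_ring
    rw [this, hPM, hPP, add_zero, sub_zero]

theorem IdOutside.mul_one_add {U P : Matrix ι ι R} (hU : U.IdOutside s)
    (hP : P.SupportedIn r {a}) (has : a ∉ s) : U * (1 + P) = (1 + U * P) * U := by
  rw [add_mul, one_mul, mul_assoc, hP.mul_eq_of_disjoint hU (disjoint_singleton_left.2 has),
    mul_add, mul_one]

end Factor

section UpperLower

variable [Fintype ι] [DecidableEq ι] [LinearOrder ι] {a : ι} {r s S : Finset ι}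

def upperUnitsOn [Ring R] (S : Finset ι) : Submonoid (Matrix ι ι R) where
  carrier := {U | U.IdOutside S ∧ U.IsUpperTriangular ∧ IsUnit U}
  mul_mem' hU hV := ⟨hU.1.mul hV.1, hU.2.1.mul hV.2.1, hU.2.2.mul hV.2.2⟩
  one_mem' := ⟨idOutside_one, blockTriangular_one, isUnit_one⟩

theorem upperUnitsOn_mono [Ring R] (h : s ⊆ S) : upperUnitsOn (R := R) s ≤ upperUnitsOn S :=
  fun _ hU => ⟨hU.1.mono h, hU.2⟩

theorem isLowerTriangular_one_add_mul [Ring R] {U P : Matrix ι ι R} (hs : ∀ x ∈ s, a < x)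
    (hU : U.IdOutside s) (hP : P.SupportedIn s {a}) : (1 + U * P).IsLowerTriangular := by
  have hUP : (U * P).SupportedIn s {a} := by
    rw [show U * P = P + (U - 1) * P by noncomm_ring]
    exact hP.add (SupportedIn.mul hU hP)
  refine blockTriangular_one.add (hUP.blockTriangular fun i hi j hj => ?_)
  rw [mem_singleton.1 hj, OrderDual.toDual_lt_toDual]
  exact (hs i hi).not_gt

variable [CommRing R]

theorem one_add_mem_upperUnitsOn {t : Finset ι} {N : Matrix ι ι R} (hN : N.SupportedIn r t)
    (hlt : ∀ i ∈ r, ∀ j ∈ t, i < j) (hr : r ⊆ S) (ht : t ⊆ S) : 1 + N ∈ upperUnitsOn S := by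
  have hU : (1 + N).IsUpperTriangular :=
    blockTriangular_one.add (hN.blockTriangular fun i hi j hj => (hlt i hi j hj).not_gt)
  refine ⟨by rw [IdOutside, add_sub_cancel_left]; exact hN.mono hr ht, hU,
    hU.isUnit_of_diag_eq_one injective_id fun i => ?_⟩
  by_contra h
  have hi := hN i i (by simpa using h)
  exact lt_irrefl i (hlt i hi.1 i hi.2)

theorem exists_mem_upperUnitsOn_mul_apply_eq_one {M : Matrix ι ι (ZMod 2)}
    (hs : ∀ x ∈ s, a < x) (hM : M.IdOutside (insert a s)) (hu : IsUnit M) :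
    ∃ V ∈ upperUnitsOn (R := ZMod 2) (insert a s), (V * M) a a = 1 := by
  by_cases ha : M a a = 1
  · exact ⟨1, one_mem _, by rwa [one_mul]⟩
  obtain ⟨z, hz⟩ : ∃ z, M z a ≠ 0 := by
    by_contra! h
    exact not_isUnit_zero (det_eq_zero_of_column_eq_zero a h ▸ (isUnit_iff_isUnit_det M).1 hu)
  have hza : z ≠ a := fun h => ha (ZMod.eq_one_of_ne_zero_mod_two (h ▸ hz))
  have hzs : z ∈ s := by
    refine (mem_insert.1 ?_).resolve_left hza
    by_contra h
    exact hz (by rw [hM.apply (Or.inl h), one_apply_ne hza])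
  refine ⟨1 + single a z 1, one_add_mem_upperUnitsOn (supportedIn_single a z 1)
    (by simpa using hs z hzs) (by simp) (by simp [hzs]), ?_⟩
  have ha0 : M a a = 0 := by_contra fun h => ha (ZMod.eq_one_of_ne_zero_mod_two h)
  rw [add_mul, one_mul, add_apply, single_mul_apply_same, one_mul, ha0, zero_add,
    ZMod.eq_one_of_ne_zero_mod_two hz]

theorem exists_mem_upperUnitsOn_mul_apply_eq {M : Matrix ι ι R} (hs : ∀ x ∈ s, a < x)
    (hM : M.IdOutside (insert a s)) (ha : M a a = 1) :
    ∃ U ∈ upperUnitsOn (R := R) (insert a s), ∀ y, (M * U) a y = (1 : Matrix ι ι R) a y := by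
  set Q : Matrix ι ι R := updateRow 0 a ((1 : Matrix ι ι R) a - M a)
  have hQ : Q.SupportedIn {a} s := by
    intro i j hij
    simp only [Q, updateRow_apply, zero_apply, Pi.sub_apply] at hij
    split_ifs at hij with hi
    · refine ⟨mem_singleton.2 hi, (mem_insert.1 (?_ : j ∈ insert a s)).resolve_left ?_⟩
      · by_contra hj
        exact hij (by rw [hM.apply (Or.inr hj), sub_self])
      · rintro rfl
        exact hij (by rw [ha, one_apply_eq, sub_self])
    · exact absurd rfl hij
  refine ⟨1 + Q, one_add_mem_upperUnitsOn hQ (fun i hi j hj => mem_singleton.1 hi ▸ hs j hj)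
    (by simp) (subset_insert a s), fun y => ?_⟩
  rw [mul_add, mul_one, add_apply, mul_apply, sum_eq_single a]
  · simp [Q, ha]
  · intro z _ hz
    simp [Q, hz]
  · simp

theorem exists_mem_upperUnitsOn_isLowerTriangular (S : Finset ι) :
    ∀ M : Matrix ι ι (ZMod 2), M.IdOutside S → IsUnit M →
      ∃ U₁ ∈ upperUnitsOn S, ∃ U₂ ∈ upperUnitsOn S, (U₁ * M * U₂).IsLowerTriangular := by
  induction S using Finset.induction_on_min with
  | empty =>
    intro M hM _
    refine ⟨1, one_mem _, 1, one_mem _, fun i j hij => ?_⟩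
    rw [mul_one, one_mul, hM.apply (Or.inl (notMem_empty i)),
      one_apply_ne (OrderDual.toDual_lt_toDual.1 hij).ne]
  | insert a s hs ih =>
    intro M hM hu
    have has : a ∉ s := fun h => lt_irrefl a (hs a h)
    -- pivot at `a = min S`, clear row `a`, split off column `a` as a lower factor `1 + P`,
    -- and move `1 + P` to the left past `U₁`
    obtain ⟨V, hV, hVM⟩ := exists_mem_upperUnitsOn_mul_apply_eq_one hs hM hu
    obtain ⟨U₀, hU₀, hrow⟩ := exists_mem_upperUnitsOn_mul_apply_eq hs (hV.1.mul hM) hVM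
    obtain ⟨P, M₀, hP, hM₀, hfac⟩ := exists_eq_one_add_mul has ((hV.1.mul hM).mul hU₀.1) hrow
    have hu₀ : IsUnit M₀ := (isUnit_iff_isUnit_det _).2 <|
      isUnit_of_mul_isUnit_right (x := (1 + P).det) <| by
        rw [← det_mul, ← hfac]
        exact (isUnit_iff_isUnit_det _).1 ((hV.2.2.mul hu).mul hU₀.2.2)
    obtain ⟨U₁, hU₁, U₂, hU₂, hL⟩ := ih M₀ hM₀ hu₀
    refine ⟨U₁ * V, mul_mem (upperUnitsOn_mono (subset_insert a s) hU₁) hV, U₀ * U₂,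
      mul_mem hU₀ (upperUnitsOn_mono (subset_insert a s) hU₂), ?_⟩
    have : U₁ * V * M * (U₀ * U₂) = (1 + U₁ * P) * (U₁ * M₀ * U₂) := by
      calc U₁ * V * M * (U₀ * U₂) = U₁ * (V * M * U₀) * U₂ := by simp only [mul_assoc]
        _ = U₁ * (1 + P) * M₀ * U₂ := by rw [hfac]; simp only [mul_assoc]
        _ = (1 + U₁ * P) * (U₁ * M₀ * U₂) := by
          rw [hU₁.1.mul_one_add hP has]; simp only [mul_assoc]
    rw [this]
    exact (isLowerTriangular_one_add_mul hs hU₁.1 hP).mul hL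

theorem exists_isProdOfLayers_mul_eq_one {M : Matrix ι ι (ZMod 2)} (hM : IsUnit M) :
    ∃ N : Matrix ι ι (ZMod 2),
      N.IsProdOfLayers univ (3 * triangularDepth (Fintype.card ι)) ∧ N * M = 1 := by
  obtain ⟨U₁, hU₁, U₂, hU₂, hL⟩ :=
    exists_mem_upperUnitsOn_isLowerTriangular univ M (idOutside_univ M) hM
  set L := U₁ * M * U₂
  have hLu : IsUnit L := (hU₁.2.2.mul hM).mul hU₂.2.2
  have : Invertible L := L.invertibleOfIsUnitDet ((isUnit_iff_isUnit_det L).1 hLu)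
  refine ⟨U₂ * L⁻¹ * U₁, ?_, ?_⟩
  · rw [show ∀ k : ℕ, 3 * k = k + k + k from fun k => by ring]
    exact ((hU₂.2.1.isProdOfLayers_univ injective_id hU₂.2.2).mul
      ((blockTriangular_inv_of_blockTriangular hL).isProdOfLayers_univ
        OrderDual.toDual.injective (isUnit_nonsing_inv_iff.2 hLu))).mul
      (hU₁.2.1.isProdOfLayers_univ injective_id hU₁.2.2)
  · rw [mul_assoc, mul_eq_one_comm, ← mul_assoc]
    exact mul_nonsing_inv L ((isUnit_iff_isUnit_det L).1 hLu)

end UpperLower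

end Matrix

theorem cnot_parallel_4n_general (n : ℕ)
    (M : Matrix (Fin n) (Fin n) (ZMod 2)) (hM : IsUnit M) :
    ∃ d : ℕ, d ≤ 4 * n ∧
    ∃ R : Fin d → Matrix (Fin n) (Fin n) (ZMod 2),
      (∀ k, IsParallelRowElim (R k)) ∧
      ((List.ofFn R).reverse).prod * M = 1 := by
  obtain ⟨N, ⟨l, hl, hlayers, rfl⟩, hNM⟩ := exists_isProdOfLayers_mul_eq_one hM
  refine ⟨l.reverse.length, ?_, l.reverse.get, fun k => ?_, ?_⟩
  · rw [List.length_reverse, hl, Fintype.card_fin]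
    exact three_mul_triangularDepth_le n
  · exact (hlayers _ (List.mem_reverse.1 (List.get_mem _ _))).isParallelRowElim
  · rwa [List.ofFn_get, List.reverse_reverse]

theorem cnot_parallel_4n (n : ℕ) (hn : 1 ≤ n)
    (M : Matrix (Fin n) (Fin n) (ZMod 2)) (hM : IsUnit M) :
    ∃ d : ℕ, d ≤ 4 * n ∧
    ∃ R : Fin d → Matrix (Fin n) (Fin n) (ZMod 2),
      (∀ k, IsParallelRowElim (R k)) ∧
      ((List.ofFn R).reverse).prod * M = 1 :=
  cnot_parallel_4n_general n M hM
end

section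
/- For every integer n ≥ 2 and every invertible lower-triangular matrix L ∈ GL(n, F₂) (i.e., L[i,j] = 0 whenever i < j; invertibility forces all diagonal entries to be 1), there exist a natural number d ≤ 2n − 3 and parallel row-elimination matrices R₁, …, R_d ∈ F₂^{n×n} such that R_d ⋯ R₂R₁L = I. -/
/-!
Clear the strictly lower part of `L` one antidiagonal `i + j = s` at a time, for
`s = 1, …, 2n - 3`. Once the antidiagonals before `s` are cleared, every row `i` with `2 i < s`
is the unit row `eᵢ`, so adding row `i` to row `s - i` whenever entry `(s - i, i)` is `1` clears
that entry and changes nothing else. The pairs on one antidiagonal involve disjoint rows, so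
each sweep is a single parallel layer.
-/

open Matrix

theorem List.prod_reverse_ofFn_mul_eq {M : Type*} [Monoid M] (r x : ℕ → M)
    (hx : ∀ k, x (k + 1) = r k * x k) (m : ℕ) :
    (List.ofFn fun k : Fin m => r k).reverse.prod * x 0 = x m := by
  induction m with
  | zero => simp
  | succ m ih =>
    rw [List.ofFn_succ', List.concat_eq_append, List.reverse_append, List.reverse_singleton,
      List.singleton_append, List.prod_cons, mul_assoc]
    simp only [Fin.val_castSucc, Fin.val_last, ih, hx]

theorem Matrix.isUnit_apply_self_of_isLowerTriangular {m R : Type*} [Fintype m] [DecidableEq m]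
    [LinearOrder m] [CommRing R] {M : Matrix m m R} (hM : IsUnit M) (hlow : M.IsLowerTriangular)
    (i : m) : IsUnit (M i i) := by
  rw [isUnit_iff_isUnit_det, det_of_isLowerTriangular M hlow, IsUnit.prod_univ_iff] at hM
  exact hM i

section RowAddition

variable {ι : Type*} [Fintype ι] [DecidableEq ι] {R : Type*} [Semiring R]

/-- For `(i, j) ∈ S`, left multiplication adds row `i` to row `j`. -/
def rowAddMatrix (S : Finset (ι × ι)) : Matrix ι ι R :=
  1 + ∑ p ∈ S, single p.2 p.1 1

theorem rowAddMatrix_mul_apply (S : Finset (ι × ι)) (A : Matrix ι ι R) (a b : ι) :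
    (rowAddMatrix S * A : Matrix ι ι R) a b = A a b + ∑ p ∈ S with p.2 = a, A p.1 b := by
  simp only [rowAddMatrix, add_mul, one_mul, Matrix.sum_mul, Matrix.add_apply, Matrix.sum_apply,
    Finset.sum_filter]
  congr 1
  refine Finset.sum_congr rfl fun p _ => ?_
  split_ifs with h
  · rw [← h, single_mul_apply_same, one_mul]
  · exact single_mul_apply_of_ne _ _ _ _ _ (Ne.symm h) A

theorem rowAddMatrix_mul_apply_of_mem {S : Finset (ι × ι)}
    (hS : Set.InjOn Prod.snd (S : Set (ι × ι))) (A : Matrix ι ι R) {i a : ι} (h : (i, a) ∈ S)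
    (b : ι) :
    (rowAddMatrix S * A : Matrix ι ι R) a b = A a b + A i b := by
  rw [rowAddMatrix_mul_apply, Finset.sum_eq_single_of_mem (i, a) (by simpa using h)]
  intro q hq hne
  simp only [Finset.mem_filter] at hq
  exact absurd (hS hq.1 h hq.2) hne

theorem rowAddMatrix_mul_apply_of_forall_notMem {S : Finset (ι × ι)} (A : Matrix ι ι R)
    {a : ι} (h : ∀ i, (i, a) ∉ S) (b : ι) :
    (rowAddMatrix S * A : Matrix ι ι R) a b = A a b := by
  rw [rowAddMatrix_mul_apply, Finset.sum_eq_zero, add_zero]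
  rintro ⟨i, _⟩ hq
  simp only [Finset.mem_filter] at hq
  exact absurd hq.1 (hq.2 ▸ h i)

end RowAddition

theorem isParallelRowElim_rowAddMatrix {ι : Type} [DecidableEq ι] {S : Finset (ι × ι)}
    (hfst : Set.InjOn Prod.fst (S : Set (ι × ι))) (hsnd : Set.InjOn Prod.snd (S : Set (ι × ι)))
    (hdisj : ∀ p ∈ S, ∀ q ∈ S, p.1 ≠ q.2) :
    IsParallelRowElim (rowAddMatrix S : Matrix ι ι (ZMod 2)) := by
  let e := S.equivFin.symm
  refine Or.inr ⟨S.card, fun k => (e k).1.1, fun k => (e k).1.2, ?_, ?_⟩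
  · refine Function.Injective.sumElim ?_ ?_ fun k l => hdisj _ (e k).2 _ (e l).2
    · exact fun k l h => e.injective (Subtype.ext (hfst (e k).2 (e l).2 h))
    · exact fun k l h => e.injective (Subtype.ext (hsnd (e k).2 (e l).2 h))
  · rw [rowAddMatrix, ← Finset.sum_coe_sort S]
    exact congrArg _ (e.sum_comp fun p : S => single p.1.2 p.1.1 (1 : ZMod 2)).symm

section AntidiagonalSweep

variable {n : ℕ}

def eliminationPairs (s : ℕ) (A : Matrix (Fin n) (Fin n) (ZMod 2)) : Finset (Fin n × Fin n) :=
  {p | (p.1 : ℕ) + p.2 = s ∧ p.1 < p.2 ∧ A p.2 p.1 = 1}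

theorem mem_eliminationPairs {s : ℕ} {A : Matrix (Fin n) (Fin n) (ZMod 2)} {i j : Fin n} :
    (i, j) ∈ eliminationPairs s A ↔ (i : ℕ) + j = s ∧ i < j ∧ A j i = 1 := by
  simp [eliminationPairs]

theorem injOn_snd_eliminationPairs (s : ℕ) (A : Matrix (Fin n) (Fin n) (ZMod 2)) :
    Set.InjOn Prod.snd (eliminationPairs s A : Set (Fin n × Fin n)) := by
  rintro ⟨i, j⟩ hp ⟨i', j'⟩ hq (rfl : j = j')
  have : (i : ℕ) + j = s := (mem_eliminationPairs.1 hp).1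
  have : (i' : ℕ) + j = s := (mem_eliminationPairs.1 hq).1
  exact Prod.ext (show i = i' from Fin.ext (by omega)) rfl

/-- Pairs on one antidiagonal `i + j = s` with `i < j` have `2 i < s < 2 j`, so they are
disjoint. -/
theorem isParallelRowElim_rowAddMatrix_eliminationPairs (s : ℕ)
    (A : Matrix (Fin n) (Fin n) (ZMod 2)) :
    IsParallelRowElim
      (rowAddMatrix (eliminationPairs s A) : Matrix (Fin n) (Fin n) (ZMod 2)) := by
  refine isParallelRowElim_rowAddMatrix ?_ (injOn_snd_eliminationPairs s A) ?_
  · rintro ⟨i, j⟩ hp ⟨i', j'⟩ hq (rfl : i = i')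
    have : (i : ℕ) + j = s := (mem_eliminationPairs.1 hp).1
    have : (i : ℕ) + j' = s := (mem_eliminationPairs.1 hq).1
    exact Prod.ext rfl (show j = j' from Fin.ext (by omega))
  · rintro ⟨i, j⟩ hp ⟨i', j'⟩ hq (h : i = j')
    obtain ⟨hs, hij, -⟩ := mem_eliminationPairs.1 hp
    obtain ⟨hs', hij', -⟩ := mem_eliminationPairs.1 hq
    have := congrArg Fin.val h
    omega

def IsEliminatedUpTo (s : ℕ) (A : Matrix (Fin n) (Fin n) (ZMod 2)) : Prop :=
  ∀ i j : Fin n, i ≤ j ∨ (i : ℕ) + j ≤ s → A i j = (1 : Matrix (Fin n) (Fin n) (ZMod 2)) i j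

theorem isEliminatedUpTo_zero {A : Matrix (Fin n) (Fin n) (ZMod 2)}
    (hlow : ∀ i j : Fin n, i < j → A i j = 0) (hdiag : ∀ i, A i i = 1) :
    IsEliminatedUpTo 0 A := by
  intro i j hij
  replace hij : i ≤ j := hij.elim id fun h => Fin.le_def.2 (by omega)
  rcases hij.lt_or_eq with hij | rfl
  · rw [hlow i j hij, one_apply_ne hij.ne]
  · rw [hdiag, one_apply_eq]

theorem IsEliminatedUpTo.rowAddMatrix_mul {s : ℕ} {A : Matrix (Fin n) (Fin n) (ZMod 2)}
    (h : IsEliminatedUpTo s A) :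
    IsEliminatedUpTo (s + 1) (rowAddMatrix (eliminationPairs (s + 1) A) * A) := by
  intro a b hab
  by_cases hpivot : ∃ i, (i, a) ∈ eliminationPairs (s + 1) A
  · obtain ⟨i, hi⟩ := hpivot
    rw [rowAddMatrix_mul_apply_of_mem (injOn_snd_eliminationPairs _ A) A hi]
    obtain ⟨hs, hia, hai⟩ := mem_eliminationPairs.1 hi
    rcases eq_or_ne b i with rfl | hbi
    · rw [hai, h b b (.inl le_rfl), one_apply_eq, one_apply_ne hia.ne']
      decide
    · have hib : A i b = 0 := by
        rw [h i b (by have := Fin.val_ne_of_ne hbi; omega), one_apply_ne hbi.symm]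
      rw [hib, add_zero, h a b (by have := Fin.val_ne_of_ne hbi; omega)]
  · push Not at hpivot
    rw [rowAddMatrix_mul_apply_of_forall_notMem A hpivot]
    by_cases hold : a ≤ b ∨ (a : ℕ) + b ≤ s
    · exact h a b hold
    · push Not at hold
      have hne : A a b ≠ 1 := fun h1 =>
        hpivot b (mem_eliminationPairs.2 ⟨by omega, hold.1, h1⟩)
      rw [one_apply_ne hold.1.ne']
      exact (by decide : ∀ x : ZMod 2, x ≠ 1 → x = 0) _ hne

theorem IsEliminatedUpTo.eq_one {A : Matrix (Fin n) (Fin n) (ZMod 2)}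
    (h : IsEliminatedUpTo (2 * n - 3) A) : A = 1 := by
  ext a b
  exact h a b (by omega)

def sweep (L : Matrix (Fin n) (Fin n) (ZMod 2)) : ℕ → Matrix (Fin n) (Fin n) (ZMod 2)
  | 0 => L
  | s + 1 => rowAddMatrix (eliminationPairs (s + 1) (sweep L s)) * sweep L s

theorem IsEliminatedUpTo.sweep {L : Matrix (Fin n) (Fin n) (ZMod 2)}
    (h : IsEliminatedUpTo 0 L) (s : ℕ) : IsEliminatedUpTo s (sweep L s) := by
  induction s with
  | zero => exact h
  | succ s ih => exact ih.rowAddMatrix_mul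

end AntidiagonalSweep

theorem cnot_parallel_lower_triangular_general (n : ℕ)
    (L : Matrix (Fin n) (Fin n) (ZMod 2)) (hL : IsUnit L)
    (hlow : ∀ i j : Fin n, i < j → L i j = 0) :
    ∃ d : ℕ, d ≤ 2 * n - 3 ∧
    ∃ R : Fin d → Matrix (Fin n) (Fin n) (ZMod 2),
      (∀ k, IsParallelRowElim (R k)) ∧
      ((List.ofFn R).reverse).prod * L = 1 := by
  have hdiag (i : Fin n) : L i i = 1 :=
    (isUnit_apply_self_of_isLowerTriangular hL (fun _ _ h => hlow _ _ h) i).eq_one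
  refine ⟨2 * n - 3, le_rfl, fun k => rowAddMatrix (eliminationPairs (k + 1) (sweep L k)),
    fun k => isParallelRowElim_rowAddMatrix_eliminationPairs _ _, ?_⟩
  change _ * sweep L 0 = 1
  rw [List.prod_reverse_ofFn_mul_eq _ (sweep L) fun _ => rfl]
  exact ((isEliminatedUpTo_zero hlow hdiag).sweep _).eq_one

theorem cnot_parallel_lower_triangular (n : ℕ) (hn : 2 ≤ n)
    (L : Matrix (Fin n) (Fin n) (ZMod 2)) (hL : IsUnit L)
    (hlow : ∀ i j : Fin n, i < j → L i j = 0) :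
    ∃ d : ℕ, d ≤ 2 * n - 3 ∧
    ∃ R : Fin d → Matrix (Fin n) (Fin n) (ZMod 2),
      (∀ k, IsParallelRowElim (R k)) ∧
      ((List.ofFn R).reverse).prod * L = 1 :=
  cnot_parallel_lower_triangular_general n L hL hlow
end

section
/- For every integer n ≥ 2, let M ∈ F₂^{n×n} be the lower-triangular all-ones matrix defined by M[i,j] = 1 if j ≤ i and M[i,j] = 0 otherwise (the prefix-XOR-summation operator). Then there exist a natural number d with d < 2·⌈log₂ n⌉ and parallel row-elimination matrices R₁, …, R_d ∈ F₂^{n×n} such that R_d ⋯ R₂R₁ = M. -/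
open Matrix

/-!
Brent–Kung: one layer adds every row `2k` into row `2k + 1`, so that the odd coordinates hold
the pair sums `x₂ₖ + x₂ₖ₊₁`; the prefix sums of these pair sums, computed recursively on the
`⌊n/2⌋` odd coordinates, are the prefix sums at odd positions; a last layer adds every row
`2k + 1` into row `2k + 2`, completing the even positions. The depth satisfies
`D(n) = D(⌊n/2⌋) + 2` with `D(2) = 1`, hence `D(n) ≤ 2⌈log₂ n⌉ - 1`.
-/

theorem isParallelRowElim_one_add_sum_single {ι : Type} [DecidableEq ι] (s : Finset ι)
    (src : ι → ι) (hsrc : Set.InjOn src s) (hdisj : ∀ x ∈ s, src x ∉ s) :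
    IsParallelRowElim (1 + ∑ x ∈ s, single x (src x) (1 : ZMod 2)) := by
  let tgt : Fin s.card → ι := fun k => s.equivFin.symm k
  have htgt : Function.Injective tgt := Subtype.val_injective.comp s.equivFin.symm.injective
  refine Or.inr ⟨s.card, src ∘ tgt, tgt, ?_, ?_⟩
  · refine Function.Injective.sumElim
      (fun a b h => htgt (hsrc (s.equivFin.symm a).2 (s.equivFin.symm b).2 h)) htgt
      fun a b h => hdisj (tgt a) (s.equivFin.symm a).2 ?_
    rw [Function.comp_apply] at h
    rw [h]
    exact (s.equivFin.symm b).2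
  · rw [← Finset.sum_coe_sort s, ← s.equivFin.symm.sum_comp]
    rfl

namespace IsParallelRowElim

variable {ι : Type} [DecidableEq ι] {A : Matrix ι ι (ZMod 2)}

theorem submatrix_equiv {κ : Type} [DecidableEq κ] (hA : IsParallelRowElim A) (σ : κ ≃ ι) :
    IsParallelRowElim (A.submatrix σ σ) := by
  obtain rfl | ⟨t, i, j, hinj, rfl⟩ := hA
  · exact Or.inl (submatrix_one_equiv σ)
  · refine Or.inr ⟨t, σ.symm ∘ i, σ.symm ∘ j, ?_, ?_⟩
    · rw [← Sum.comp_elim]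
      exact σ.symm.injective.comp hinj
    · ext p q
      simp [Matrix.sum_apply, single_apply, one_apply, Equiv.symm_apply_eq]

theorem fromBlocks_one {ι' : Type} [DecidableEq ι'] (hA : IsParallelRowElim A) :
    IsParallelRowElim (fromBlocks A 0 0 (1 : Matrix ι' ι' (ZMod 2))) := by
  obtain rfl | ⟨t, i, j, hinj, rfl⟩ := hA
  · exact Or.inl Matrix.fromBlocks_one
  · refine Or.inr ⟨t, Sum.inl ∘ i, Sum.inl ∘ j, ?_, ?_⟩
    · rw [← Sum.comp_elim]
      exact Sum.inl_injective.comp hinj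
    · ext (a | a) (b | b) <;> simp [Matrix.sum_apply, single_apply, one_apply]

end IsParallelRowElim

namespace Matrix

variable {R : Type*} [Semiring R]

def blockExtend {ι ι' κ : Type*} [Fintype ι] [Fintype ι'] [Fintype κ] [DecidableEq ι]
    [DecidableEq ι'] [DecidableEq κ] (σ : κ ≃ ι ⊕ ι') : Matrix ι ι R →* Matrix κ κ R where
  toFun A := (fromBlocks A 0 0 1).submatrix σ σ
  map_one' := by rw [Matrix.fromBlocks_one, submatrix_one_equiv]
  map_mul' A B := by rw [submatrix_mul_equiv, fromBlocks_multiply]; simp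

theorem _root_.IsParallelRowElim.blockExtend {ι ι' κ : Type} [Fintype ι] [Fintype ι']
    [Fintype κ] [DecidableEq ι] [DecidableEq ι'] [DecidableEq κ] (σ : κ ≃ ι ⊕ ι')
    {A : Matrix ι ι (ZMod 2)} (hA : IsParallelRowElim A) :
    IsParallelRowElim (blockExtend σ A) :=
  hA.fromBlocks_one.submatrix_equiv σ

variable {n : ℕ}

variable (R n) in
def prefixSum : Matrix (Fin n) (Fin n) R :=
  of fun p q => if q ≤ p then 1 else 0

variable (R n) in
def prefixSumOnOddRows : Matrix (Fin n) (Fin n) R :=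
  of fun p q =>
    if Odd (p : ℕ) then (if q ≤ p then 1 else 0) else (1 : Matrix (Fin n) (Fin n) R) p q

def addPrevRows (P : ℕ → Prop) [DecidablePred P] : Matrix (Fin n) (Fin n) R :=
  (1 : Matrix (Fin n) (Fin n) R) + of fun (p q : Fin n) => if P p ∧ (q : ℕ) + 1 = p then 1 else 0

section addPrevRows

variable (P : ℕ → Prop) [DecidablePred P]

theorem addPrevRows_mul_apply (A : Matrix (Fin n) (Fin n) R) (p q : Fin n) :
    (addPrevRows P * A : Matrix (Fin n) (Fin n) R) p q =
      A p q + if P p ∧ 0 < (p : ℕ) then A ⟨p - 1, by omega⟩ q else 0 := by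
  rw [addPrevRows, add_mul, one_mul, Matrix.add_apply, mul_apply]
  congr 1
  split_ifs with h
  · rw [Finset.sum_eq_single ⟨p - 1, by omega⟩]
    · simp only [of_apply, h.1, true_and]
      rw [if_pos (by omega), one_mul]
    · intro k _ hk
      rw [of_apply, if_neg, zero_mul]
      rintro ⟨-, hk'⟩
      exact hk (Fin.ext (by simp only; omega))
    · simp
  · refine Finset.sum_eq_zero fun k _ => ?_
    rw [of_apply, if_neg, zero_mul]
    rintro ⟨hp, hk⟩
    exact h ⟨hp, by omega⟩

theorem mul_addPrevRows_apply (A : Matrix (Fin n) (Fin n) R) (p q : Fin n) :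
    (A * addPrevRows P : Matrix (Fin n) (Fin n) R) p q =
      A p q + if h : (q : ℕ) + 1 < n ∧ P (q + 1) then A p ⟨q + 1, h.1⟩ else 0 := by
  rw [addPrevRows, mul_add, mul_one, Matrix.add_apply, mul_apply]
  congr 1
  split_ifs with h
  · rw [Finset.sum_eq_single ⟨q + 1, h.1⟩]
    · simp [h.2]
    · intro k _ hk
      rw [of_apply, if_neg, mul_zero]
      rintro ⟨-, hk'⟩
      exact hk (Fin.ext (by simp only; omega))
    · simp
  · refine Finset.sum_eq_zero fun k _ => ?_
    rw [of_apply, if_neg, mul_zero]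
    rintro ⟨hp, hk⟩
    exact h ⟨by omega, by rwa [hk]⟩

/-- The condition on `P` says that no row receiving its predecessor is itself added to the
next row. -/
theorem isParallelRowElim_addPrevRows (hP : ∀ m, P (m + 1) → ¬ P m) :
    IsParallelRowElim (addPrevRows P : Matrix (Fin n) (Fin n) (ZMod 2)) := by
  let prev : Fin n → Fin n := fun p => ⟨p - 1, by omega⟩
  have hsum : (addPrevRows P : Matrix (Fin n) (Fin n) (ZMod 2)) =
      1 + ∑ p ∈ Finset.univ.filter (fun p : Fin n => P p ∧ 0 < (p : ℕ)), single p (prev p) 1 := by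
    ext p q
    rw [addPrevRows, Matrix.add_apply, Matrix.add_apply, Matrix.sum_apply]
    simp only [single_apply, ite_and, Finset.sum_ite_eq', Finset.mem_filter, Finset.mem_univ,
      true_and, of_apply]
    congr 1
    simp only [prev, Fin.ext_iff]
    split_ifs <;> first | rfl | omega
  rw [hsum]
  refine isParallelRowElim_one_add_sum_single _ prev ?_ ?_
  · intro p hp q hq h
    simp only [Finset.coe_filter, Finset.mem_univ, true_and, Set.mem_ofPred_eq] at hp hq
    exact Fin.ext (by have := congrArg Fin.val h; simp only [prev] at this; omega)
  · intro p hp hprev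
    simp only [Finset.mem_filter, Finset.mem_univ, true_and, prev] at hp hprev
    exact hP _ (by rw [Nat.sub_add_cancel hp.2]; exact hp.1) hprev.1

end addPrevRows

def finHalfEquivOdd (n : ℕ) : Fin (n / 2) ≃ {p : Fin n // Odd (p : ℕ)} where
  toFun a := ⟨⟨2 * a + 1, by omega⟩, odd_two_mul_add_one _⟩
  invFun p := ⟨p.1 / 2, by have := p.1.2; have := Nat.odd_iff.1 p.2; omega⟩
  left_inv a := by ext; simp only; omega
  right_inv p := by ext; simp only; have := Nat.odd_iff.1 p.2; omega

/-- The `k`-th odd position `2k + 1` (0-based) is the second entry of the `k`-th pair. -/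
def oddSplit (n : ℕ) : Fin n ≃ Fin (n / 2) ⊕ {p : Fin n // ¬ Odd (p : ℕ)} :=
  ((finHalfEquivOdd n).sumCongr (Equiv.refl _)).trans (Equiv.sumCompl _) |>.symm

theorem oddSplit_apply_of_odd {p : Fin n} (hp : Odd (p : ℕ)) :
    oddSplit n p = .inl ⟨p / 2, by have := p.2; have := Nat.odd_iff.1 hp; omega⟩ := by
  simp [oddSplit, Equiv.sumCompl, finHalfEquivOdd, hp]

theorem oddSplit_apply_of_not_odd {p : Fin n} (hp : ¬ Odd (p : ℕ)) :
    oddSplit n p = .inr ⟨p, hp⟩ := by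
  simp [oddSplit, Equiv.sumCompl, hp]

theorem blockExtend_oddSplit_prefixSum_apply (p q : Fin n) :
    blockExtend (oddSplit n) (prefixSum R (n / 2)) p q =
      if Odd (p : ℕ) ∧ Odd (q : ℕ) then (if q ≤ p then 1 else 0)
      else (1 : Matrix (Fin n) (Fin n) R) p q := by
  change fromBlocks _ _ _ _ (oddSplit n p) (oddSplit n q) = _
  by_cases hp : Odd (p : ℕ) <;> by_cases hq : Odd (q : ℕ)
  · rw [oddSplit_apply_of_odd hp, oddSplit_apply_of_odd hq, fromBlocks_apply₁₁, if_pos ⟨hp, hq⟩]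
    have := Nat.odd_iff.1 hp
    have := Nat.odd_iff.1 hq
    simp only [prefixSum, of_apply, Fin.le_def]
    split_ifs <;> first | rfl | omega
  · rw [oddSplit_apply_of_odd hp, oddSplit_apply_of_not_odd hq, fromBlocks_apply₁₂,
      if_neg (by tauto), one_apply_ne (by rintro rfl; exact hq hp), zero_apply]
  · rw [oddSplit_apply_of_not_odd hp, oddSplit_apply_of_odd hq, fromBlocks_apply₂₁,
      if_neg (by tauto), one_apply_ne (by rintro rfl; exact hp hq), zero_apply]
  · rw [oddSplit_apply_of_not_odd hp, oddSplit_apply_of_not_odd hq, fromBlocks_apply₂₂,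
      if_neg (by tauto)]
    simp only [one_apply, Subtype.mk.injEq]

theorem blockExtend_prefixSum_mul_addPrevRows_odd :
    blockExtend (oddSplit n) (prefixSum R (n / 2)) * addPrevRows Odd = prefixSumOnOddRows R n := by
  ext p q
  simp only [mul_addPrevRows_apply, blockExtend_oddSplit_prefixSum_apply, prefixSumOnOddRows,
    of_apply, one_apply, Fin.ext_iff, Fin.le_def, Nat.odd_iff]
  split_ifs <;> first | (exfalso; omega) | simp

theorem addPrevRows_even_mul_prefixSumOnOddRows :
    addPrevRows Even * prefixSumOnOddRows R n = prefixSum R n := by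
  ext p q
  simp only [addPrevRows_mul_apply, prefixSum, prefixSumOnOddRows, of_apply, one_apply,
    Fin.ext_iff, Fin.le_def, Nat.odd_iff, Nat.even_iff]
  split_ifs <;> first | (exfalso; omega) | simp

end Matrix

theorem Nat.clog_two_div_two_add_one_le {n : ℕ} (hn : 2 ≤ n) :
    Nat.clog 2 (n / 2) + 1 ≤ Nat.clog 2 n := by
  rw [Nat.clog_of_two_le one_lt_two hn]
  exact Nat.add_le_add_right (Nat.clog_mono_right 2 (by omega)) 1

theorem exists_list_prod_eq_prefixSum (n : ℕ) :
    ∃ L : List (Matrix (Fin n) (Fin n) (ZMod 2)), L.length ≤ 2 * Nat.clog 2 n - 1 ∧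
      (∀ A ∈ L, IsParallelRowElim A) ∧ L.prod = prefixSum (ZMod 2) n := by
  induction n using Nat.strong_induction_on with
  | _ n ih =>
  obtain hn | rfl | hn : n < 2 ∨ n = 2 ∨ 3 ≤ n := by omega
  · refine ⟨[], by simp, by simp, ?_⟩
    rw [List.prod_nil]
    refine Matrix.ext fun p q => ?_
    obtain rfl : p = q := Fin.ext (by omega)
    simp [prefixSum]
  -- The general step below spends two layers, one more than `n = 2` may use.
  · have := Nat.clog_pos (b := 2) (n := 2) one_lt_two one_lt_two
    refine ⟨[addPrevRows Odd], by simp; omega, ?_, by decide⟩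
    simpa using isParallelRowElim_addPrevRows Odd fun m => Nat.odd_add_one.1
  · obtain ⟨L, hlen, hpar, hprod⟩ := ih (n / 2) (by omega)
    refine ⟨addPrevRows Even :: (L.map (blockExtend (oddSplit n)) ++ [addPrevRows Odd]),
      ?_, ?_, ?_⟩
    · have := Nat.clog_two_div_two_add_one_le (n := n) (by omega)
      have := (Nat.lt_clog_iff_pow_lt one_lt_two (y := 1)).2 (by omega : 2 ^ 1 < n)
      simp only [List.length_cons, List.length_append, List.length_map, List.length_nil]
      omega
    · simp only [List.mem_cons, List.mem_append, List.mem_map, List.not_mem_nil, or_false]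
      rintro A (rfl | ⟨B, hB, rfl⟩ | rfl)
      · exact isParallelRowElim_addPrevRows Even fun m => Nat.even_add_one.1
      · exact (hpar B hB).blockExtend _
      · exact isParallelRowElim_addPrevRows Odd fun m => Nat.odd_add_one.1
    · rw [List.prod_cons, List.prod_append, ← map_list_prod, hprod, List.prod_singleton,
        blockExtend_prefixSum_mul_addPrevRows_odd, addPrevRows_even_mul_prefixSumOnOddRows]

theorem prefix_xor_parallel (n : ℕ) (hn : 2 ≤ n) :
    ∃ d : ℕ, d < 2 * Nat.clog 2 n ∧
    ∃ R : Fin d → Matrix (Fin n) (Fin n) (ZMod 2),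
      (∀ k, IsParallelRowElim (R k)) ∧
      ((List.ofFn R).reverse).prod =
        Matrix.of (fun i j : Fin n => if j ≤ i then 1 else 0) := by
  obtain ⟨L, hlen, hpar, hprod⟩ := exists_list_prod_eq_prefixSum n
  have := Nat.clog_pos one_lt_two hn
  refine ⟨L.reverse.length, by simp only [List.length_reverse]; omega, L.reverse.get,
    fun k => hpar _ (List.mem_reverse.1 (List.get_mem _ k)), ?_⟩
  rw [List.ofFn_get, List.reverse_reverse, hprod]
  rfl
end

section
/- Let N ≥ 1 and let R₁, …, R_d ∈ F₂^{N×N} be parallel row-elimination matrices, and set M = R_d ⋯ R₂R₁. Then every row of M has at most 2^d nonzero entries. Consequently, if some row of M has all N entries nonzero (for example, if M implements the parity map whose last output is x₁ ⊕ ⋯ ⊕ x_N), then d ≥ log₂ N. -/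
open Matrix

/-!
Row `r` of `A * B` is a combination of the rows of `B` indexed by the support of row `r` of `A`,
so row supports grow at most multiplicatively along a product. A parallel row-elimination
matrix has at most two nonzero entries per row, because each row is the target of at most one
of the simultaneous additions; hence every row of a depth-`d` product has at most `2 ^ d`
nonzero entries, and a full row forces `N ≤ 2 ^ d`.
-/

open Finset

namespace Matrix

variable {ι κ μ α : Type*} [Fintype κ] [DecidableEq α]

def rowSupport [Zero α] (A : Matrix ι κ α) (r : ι) : Finset κ :=
  {c | A r c ≠ 0}

@[simp]
lemma mem_rowSupport [Zero α] {A : Matrix ι κ α} {r : ι} {c : κ} :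
    c ∈ A.rowSupport r ↔ A r c ≠ 0 := by
  simp [rowSupport]

lemma rowSupport_mul_subset [NonUnitalNonAssocSemiring α] [Fintype μ] [DecidableEq κ]
    (A : Matrix ι μ α) (B : Matrix μ κ α) (r : ι) :
    (A * B).rowSupport r ⊆ (A.rowSupport r).biUnion B.rowSupport := by
  intro c hc
  rw [mem_rowSupport, mul_apply] at hc
  obtain ⟨m, -, hm⟩ := exists_ne_zero_of_sum_ne_zero hc
  exact mem_biUnion.mpr
    ⟨m, mem_rowSupport.mpr (left_ne_zero_of_mul hm),
      mem_rowSupport.mpr (right_ne_zero_of_mul hm)⟩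

lemma card_rowSupport_mul_le [NonUnitalNonAssocSemiring α] [Fintype μ] [DecidableEq κ]
    {A : Matrix ι μ α} {B : Matrix μ κ α} {a b : ℕ}
    (hA : ∀ r, #(A.rowSupport r) ≤ a) (hB : ∀ m, #(B.rowSupport m) ≤ b) (r : ι) :
    #((A * B).rowSupport r) ≤ a * b :=
  calc #((A * B).rowSupport r)
      ≤ #((A.rowSupport r).biUnion B.rowSupport) := card_le_card (rowSupport_mul_subset ..)
    _ ≤ #(A.rowSupport r) * b := card_biUnion_le_card_mul _ _ _ fun m _ => hB m
    _ ≤ a * b := Nat.mul_le_mul_right b (hA r)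

lemma rowSupport_one_subset [DecidableEq κ] [Zero α] [One α] (r : κ) :
    (1 : Matrix κ κ α).rowSupport r ⊆ {r} := by
  intro c hc
  rw [mem_rowSupport, one_apply] at hc
  simp_all [eq_comm]

lemma card_rowSupport_one_le [DecidableEq κ] [Zero α] [One α] (r : κ) :
    #((1 : Matrix κ κ α).rowSupport r) ≤ 1 :=
  card_le_card (rowSupport_one_subset r) |>.trans_eq (card_singleton r)

lemma card_rowSupport_list_prod_le [DecidableEq κ] [Semiring α] {s : ℕ}
    (L : List (Matrix κ κ α)) (hL : ∀ A ∈ L, ∀ r, #(A.rowSupport r) ≤ s) (r : κ) :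
    #(L.prod.rowSupport r) ≤ s ^ L.length := by
  induction L generalizing r with
  | nil => exact card_rowSupport_one_le r
  | cons A L ih =>
    rw [List.prod_cons, List.length_cons, pow_succ']
    exact card_rowSupport_mul_le (hL A List.mem_cons_self)
      (ih fun B hB => hL B (List.mem_cons_of_mem A hB)) r

end Matrix

namespace IsParallelRowElim

variable {ι : Type} [Fintype ι] [DecidableEq ι]

lemma card_rowSupport_le_two {R : Matrix ι ι (ZMod 2)} (hR : IsParallelRowElim R) (r : ι) :
    #(R.rowSupport r) ≤ 2 := by
  rcases hR with rfl | ⟨t, i, j, hinj, hR⟩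
  · exact (card_rowSupport_one_le r).trans one_le_two
  have hj : Function.Injective j := hinj.comp Sum.inr_injective
  set targets : Finset (Fin t) := {k | j k = r}
  have hsub : R.rowSupport r ⊆ insert r (targets.image i) := by
    intro c hc
    rw [mem_rowSupport, hR, Matrix.add_apply, Matrix.sum_apply] at hc
    by_cases hcr : c = r
    · exact hcr ▸ mem_insert_self c _
    rw [one_apply_ne' hcr, zero_add] at hc
    obtain ⟨k, -, hk⟩ := exists_ne_zero_of_sum_ne_zero hc
    rw [single_apply] at hk
    obtain ⟨⟨rfl, rfl⟩, -⟩ := ite_ne_right_iff.mp hk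
    exact mem_insert_of_mem (mem_image_of_mem i (by simp [targets]))
  have htargets : #targets ≤ 1 :=
    card_le_one.mpr fun k hk l hl => hj (by simp_all [targets])
  calc #(R.rowSupport r) ≤ #(targets.image i) + 1 :=
        (card_le_card hsub).trans (card_insert_le _ _)
    _ ≤ #targets + 1 := Nat.add_le_add_right card_image_le 1
    _ ≤ 2 := by omega

end IsParallelRowElim

theorem parallel_row_elim_row_sparsity_general (N : ℕ) (d : ℕ)
    (R : Fin d → Matrix (Fin N) (Fin N) (ZMod 2))
    (hR : ∀ k, IsParallelRowElim (R k))
    (M : Matrix (Fin N) (Fin N) (ZMod 2))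
    (hM : M = ((List.ofFn R).reverse).prod) :
    (∀ i : Fin N, (Finset.univ.filter (fun j : Fin N => M i j ≠ 0)).card ≤ 2 ^ d) ∧
    ((∃ i : Fin N, ∀ j : Fin N, M i j ≠ 0) → Real.logb 2 N ≤ (d : ℝ)) := by
  have hsparse : ∀ i, #(M.rowSupport i) ≤ 2 ^ d := by
    intro i
    simpa [hM] using Matrix.card_rowSupport_list_prod_le (List.ofFn R).reverse
      (by simpa using fun k => (hR k).card_rowSupport_le_two) i
  refine ⟨hsparse, fun ⟨i, hfull⟩ => ?_⟩
  have hN : N ≤ 2 ^ d := by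
    simpa [eq_univ_of_forall fun j => mem_rowSupport.mpr (hfull j)] using hsparse i
  rw [Real.logb_le_iff_le_rpow one_lt_two (by exact_mod_cast i.pos), Real.rpow_natCast]
  exact_mod_cast hN

theorem parallel_row_elim_row_sparsity (N : ℕ) (hN : 1 ≤ N) (d : ℕ)
    (R : Fin d → Matrix (Fin N) (Fin N) (ZMod 2))
    (hR : ∀ k, IsParallelRowElim (R k))
    (M : Matrix (Fin N) (Fin N) (ZMod 2))
    (hM : M = ((List.ofFn R).reverse).prod) :
    (∀ i : Fin N, (Finset.univ.filter (fun j : Fin N => M i j ≠ 0)).card ≤ 2 ^ d) ∧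
    ((∃ i : Fin N, ∀ j : Fin N, M i j ≠ 0) → Real.logb 2 N ≤ (d : ℝ)) :=
  parallel_row_elim_row_sparsity_general N d R hR M hM
end
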